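/- arXiv:1709.00636 — 5 statements merged into one kernel-verified Lean document; each statement's English description precedes it below -/
import Mathlib

section
/- Let α > 0, κ > 0, μ ≥ 0 with μ·κ < 1, and let ω be a real number with 0 ≤ ω ≤ (κ⁻¹ − μ)·α/(1+α)². Then κ⁻¹ − ω(1+α) > 0 and (α·μ + ω(1+α))/(κ⁻¹ − ω(1+α)) ≤ α. -/
/-- Estimate (psim): for `α > 0`, `κ > 0`, `μ ≥ 0` with `μκ < 1`, and
`0 ≤ ω ≤ (κ⁻¹ − μ)α/(1+α)²`, one has `κ⁻¹ − ω(1+α) > 0` and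
`(αμ + ω(1+α))/(κ⁻¹ − ω(1+α)) ≤ α`. -/
theorem graph_transform_lipschitz_estimate
    (α κ μ ω : ℝ) (hα : 0 < α) (hκ : 0 < κ) (hμ : 0 ≤ μ) (hμκ : μ * κ < 1)
    (hω0 : 0 ≤ ω) (hω : ω ≤ (κ⁻¹ - μ) * α / (1 + α) ^ 2) :
    0 < κ⁻¹ - ω * (1 + α) ∧ (α * μ + ω * (1 + α)) / (κ⁻¹ - ω * (1 + α)) ≤ α := by
  have h1 : μ < κ⁻¹ := by
    rw [inv_eq_one_div]; exact (lt_div_iff₀ hκ).mpr (by linarith)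
  have h2 : ω * (1 + α) ^ 2 ≤ (κ⁻¹ - μ) * α := (le_div_iff₀ (by positivity)).mp hω
  have hpos : 0 < κ⁻¹ - ω * (1 + α) := by nlinarith [sq_nonneg (1 + α)]
  refine ⟨hpos, ?_⟩
  rw [div_le_iff₀ hpos]
  nlinarith
end

section
/- Let E, E′ be real normed spaces, let F be a real Banach space and F′ a real normed space. Let A : E → E′ be continuous linear with ‖A‖ ≤ μ, and B : F ≃ F′ a continuous linear equivalence with ‖B⁻¹‖ ≤ κ, where μ ≥ 0, κ > 0 and μ·κ < 1. Let α ∈ (0,1), let σ ≥ 0 with σ ≤ (κ⁻¹ − μ)·α/(1+α)², and let δ, δ′ > 0 with δ′ ≤ ((κ⁻¹ + αμ)/(1+α))·δ. Let a : B_E(δ) × B_F(δ) → E′ and b : B_E(δ) × B_F(δ) → F′ satisfy a(0,0) = 0, b(0,0) = 0, ‖a(v,w) − a(v′,w′)‖ ≤ σ·(‖v−v′‖ + ‖w−w′‖) and ‖b(v,w) − b(v′,w′)‖ ≤ σ·(‖v−v′‖ + ‖w−w′‖), and define f(v,w) = (A(v) + a(v,w), B(w) + b(v,w)). Then for every α-Lipschitz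 map φ : B_F(δ) → B_E(δ) with φ(0) = 0, there exists an α-Lipschitz map ψ : B_{F′}(δ′) → B_{E′}(δ′) with ψ(0) = 0 such that {f(φ(w), w) : w ∈ B_F(δ)} ∩ (B_{E′}(δ′) × B_{F′}(δ′)) = {(ψ(w′), w′) : w′ ∈ B_{F′}(δ′)}. -/
set_option maxHeartbeats 1000000


/-- One step of the graph transform (Proposition "funciongrafico", single step):
under hyperbolicity bounds `‖A‖ ≤ μ`, `‖B⁻¹‖ ≤ κ`, `μκ < 1`, smallness
`σ ≤ (κ⁻¹ − μ)α/(1+α)²` of the Lipschitz constant of the nonlinear part `(a, b)`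
vanishing at the origin, and radii `δ' ≤ ((κ⁻¹ + αμ)/(1+α))·δ`, the image under
`f(v,w) = (A v + a(v,w), B w + b(v,w))` of the graph of any `α`-Lipschitz map
`φ : B_F(δ) → B_E(δ)` with `φ 0 = 0`, intersected with `B_{E'}(δ') × B_{F'}(δ')`,
is the graph of an `α`-Lipschitz map `ψ : B_{F'}(δ') → B_{E'}(δ')` with `ψ 0 = 0`. -/
theorem graph_transform_step
    (E E' F F' : Type*)
    [NormedAddCommGroup E] [NormedSpace ℝ E] [NormedAddCommGroup E'] [NormedSpace ℝ E']
    [NormedAddCommGroup F] [NormedSpace ℝ F] [CompleteSpace F]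
    [NormedAddCommGroup F'] [NormedSpace ℝ F']
    (A : E →L[ℝ] E') (B : F ≃L[ℝ] F') (μ κ : ℝ)
    (hμ : 0 ≤ μ) (hκ : 0 < κ) (hμκ : μ * κ < 1)
    (hA : ‖A‖ ≤ μ) (hB : ‖(B.symm : F' →L[ℝ] F)‖ ≤ κ)
    (α : ℝ) (hα : α ∈ Set.Ioo (0 : ℝ) 1)
    (σ : ℝ) (hσ0 : 0 ≤ σ) (hσ : σ ≤ (κ⁻¹ - μ) * α / (1 + α) ^ 2)
    (δ δ' : ℝ) (hδ : 0 < δ) (hδ' : 0 < δ')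
    (hδδ' : δ' ≤ ((κ⁻¹ + α * μ) / (1 + α)) * δ)
    (a : {v : E // ‖v‖ ≤ δ} → {w : F // ‖w‖ ≤ δ} → E')
    (b : {v : E // ‖v‖ ≤ δ} → {w : F // ‖w‖ ≤ δ} → F')
    (ha0 : ∀ (v : {v : E // ‖v‖ ≤ δ}) (w : {w : F // ‖w‖ ≤ δ}), (v : E) = 0 → (w : F) = 0 → a v w = 0)
    (hb0 : ∀ (v : {v : E // ‖v‖ ≤ δ}) (w : {w : F // ‖w‖ ≤ δ}), (v : E) = 0 → (w : F) = 0 → b v w = 0)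
    (ha : ∀ v v' w w', ‖a v w - a v' w'‖ ≤ σ * (‖(v : E) - (v' : E)‖ + ‖(w : F) - (w' : F)‖))
    (hb : ∀ v v' w w', ‖b v w - b v' w'‖ ≤ σ * (‖(v : E) - (v' : E)‖ + ‖(w : F) - (w' : F)‖))
    (φ : {w : F // ‖w‖ ≤ δ} → {v : E // ‖v‖ ≤ δ})
    (hφ0 : ∀ w : {w : F // ‖w‖ ≤ δ}, (w : F) = 0 → (φ w : E) = 0)
    (hφ : ∀ w z, ‖(φ w : E) - (φ z : E)‖ ≤ α * ‖(w : F) - (z : F)‖) :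
    ∃ ψ : {w' : F' // ‖w'‖ ≤ δ'} → {v' : E' // ‖v'‖ ≤ δ'},
      (∀ w' : {w' : F' // ‖w'‖ ≤ δ'}, (w' : F') = 0 → (ψ w' : E') = 0) ∧
      (∀ x y, ‖(ψ x : E') - (ψ y : E')‖ ≤ α * ‖(x : F') - (y : F')‖) ∧
      {p : E' × F' |
          (∃ w : {w : F // ‖w‖ ≤ δ},
            p = (A (φ w : E) + a (φ w) w, B (w : F) + b (φ w) w)) ∧
          ‖p.1‖ ≤ δ' ∧ ‖p.2‖ ≤ δ'} =
        {p : E' × F' | ∃ w' : {w' : F' // ‖w'‖ ≤ δ'}, p = ((ψ w' : E'), (w' : F'))} := by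
  obtain ⟨hα0, hα1⟩ := hα
  have h1α : (0:ℝ) < 1 + α := by linarith
  have hκi : (0:ℝ) < κ⁻¹ := inv_pos.mpr hκ
  have hκκi : κ * κ⁻¹ = 1 := mul_inv_cancel₀ (ne_of_gt hκ)
  have hμκi : μ < κ⁻¹ := by nlinarith [mul_pos hκ hκi]
  have hσ' : σ * (1 + α) ^ 2 ≤ (κ⁻¹ - μ) * α := by
    rw [le_div_iff₀ (by positivity)] at hσ; linarith
  set c : ℝ := κ⁻¹ - σ * (1 + α) with hcdef
  have hc1 : (κ⁻¹ + α * μ) / (1 + α) ≤ c := by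
    rw [div_le_iff₀ h1α, hcdef]; nlinarith
  have hc0 : (0:ℝ) < c := lt_of_lt_of_le (by positivity) hc1
  have hδ'c : δ' ≤ c * δ := hδδ'.trans (mul_le_mul_of_nonneg_right hc1 hδ.le)
  have hlip : α * μ + σ * (1 + α) ≤ α * c := by
    rw [hcdef]; nlinarith
  have hδE0 : ‖(0:E)‖ ≤ δ := by simp [hδ.le]
  have hδF0 : ‖(0:F)‖ ≤ δ := by simp [hδ.le]
  have hφz0 : (φ ⟨0, hδF0⟩ : E) = 0 := hφ0 _ rfl
  have hφnorm : ∀ w : {w : F // ‖w‖ ≤ δ}, ‖(φ w : E)‖ ≤ α * ‖(w : F)‖ := by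
    intro w
    have h := hφ w ⟨0, hδF0⟩
    simpa [hφz0] using h
  have hbnorm : ∀ w : {w : F // ‖w‖ ≤ δ}, ‖b (φ w) w‖ ≤ σ * (1 + α) * ‖(w : F)‖ := by
    intro w
    have h := hb (φ w) ⟨0, hδE0⟩ w ⟨0, hδF0⟩
    rw [hb0 ⟨0, hδE0⟩ ⟨0, hδF0⟩ rfl rfl] at h
    simp only [sub_zero] at h
    have h2 := hφnorm w
    nlinarith [norm_nonneg (w : F)]
  have hBsymm : ∀ x : F', ‖B.symm x‖ ≤ κ * ‖x‖ := by
    intro x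
    calc ‖B.symm x‖ ≤ ‖(B.symm : F' →L[ℝ] F)‖ * ‖x‖ :=
          (B.symm : F' →L[ℝ] F).le_opNorm _
      _ ≤ κ * ‖x‖ := mul_le_mul_of_nonneg_right hB (norm_nonneg _)
  have hBlow : ∀ x : F, κ⁻¹ * ‖x‖ ≤ ‖B x‖ := by
    intro x
    have h1 : ‖x‖ ≤ κ * ‖B x‖ := by
      have := hBsymm (B x)
      simpa using this
    have h2 : κ⁻¹ * (κ * ‖B x‖) = ‖B x‖ := by
      field_simp
    linarith [mul_le_mul_of_nonneg_left h1 hκi.le]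
  have hGlow : ∀ w z : {w : F // ‖w‖ ≤ δ},
      c * ‖(w : F) - (z : F)‖ ≤
        ‖(B (w : F) + b (φ w) w) - (B (z : F) + b (φ z) z)‖ := by
    intro w z
    have hb' := hb (φ w) (φ z) w z
    have hφ' := hφ w z
    have he : (B (w : F) + b (φ w) w) - (B (z : F) + b (φ z) z)
        = B ((w : F) - (z : F)) + (b (φ w) w - b (φ z) z) := by
      rw [map_sub]; abel
    have hkey : ‖B ((w : F) - (z : F))‖ - ‖b (φ w) w - b (φ z) z‖ ≤
        ‖(B (w : F) + b (φ w) w) - (B (z : F) + b (φ z) z)‖ := by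
      rw [he]
      have h8 : ‖B ((w : F) - (z : F))‖ ≤
          ‖B ((w : F) - (z : F)) + (b (φ w) w - b (φ z) z)‖ + ‖b (φ w) w - b (φ z) z‖ := by
        calc ‖B ((w : F) - (z : F))‖
            = ‖(B ((w : F) - (z : F)) + (b (φ w) w - b (φ z) z))
                + (-(b (φ w) w - b (φ z) z))‖ := by
              rw [show (B ((w : F) - (z : F)) + (b (φ w) w - b (φ z) z))
                + (-(b (φ w) w - b (φ z) z)) = B ((w : F) - (z : F)) by abel]
          _ ≤ ‖B ((w : F) - (z : F)) + (b (φ w) w - b (φ z) z)‖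
                + ‖-(b (φ w) w - b (φ z) z)‖ := norm_add_le _ _
          _ = ‖B ((w : F) - (z : F)) + (b (φ w) w - b (φ z) z)‖
                + ‖b (φ w) w - b (φ z) z‖ := by rw [norm_neg]
      linarith
    have hBl := hBlow ((w : F) - (z : F))
    rw [hcdef]
    nlinarith [mul_le_mul_of_nonneg_left hφ' hσ0, norm_nonneg ((w : F) - (z : F))]
  haveI : CompleteSpace {w : F // ‖w‖ ≤ δ} :=
    (isClosed_le continuous_norm continuous_const : IsClosed {w : F | ‖w‖ ≤ δ}).completeSpace_coe
  haveI : Nonempty {w : F // ‖w‖ ≤ δ} := ⟨⟨0, hδF0⟩⟩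
  have hκσ1 : κ * (σ * (1 + α)) < 1 := by
    nlinarith [mul_le_mul_of_nonneg_left hσ' hκ.le,
      mul_nonneg (mul_nonneg hκ.le hσ0) h1α.le]
  have hsurj : ∀ w' : {w' : F' // ‖w'‖ ≤ δ'},
      ∃ w : {w : F // ‖w‖ ≤ δ}, B (w : F) + b (φ w) w = (w' : F') := by
    intro w'
    have hTmem : ∀ w : {w : F // ‖w‖ ≤ δ},
        ‖B.symm ((w' : F') - b (φ w) w)‖ ≤ δ := by
      intro w
      have h1 := hBsymm ((w' : F') - b (φ w) w)
      have h2 : ‖(w' : F') - b (φ w) w‖ ≤ δ' + σ * (1 + α) * δ := by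
        have h3 := norm_sub_le ((w' : F')) (b (φ w) w)
        have h4 := hbnorm w
        have hw' := w'.2
        have hw := w.2
        nlinarith [mul_le_mul_of_nonneg_left hw (mul_nonneg hσ0 h1α.le)]
      have h5 : κ * (δ' + σ * (1 + α) * δ) ≤ δ := by
        have := mul_le_mul_of_nonneg_left hδ'c hκ.le
        rw [hcdef] at this
        nlinarith
      nlinarith [mul_le_mul_of_nonneg_left h2 hκ.le]
    set T : {w : F // ‖w‖ ≤ δ} → {w : F // ‖w‖ ≤ δ} :=
      fun w => ⟨B.symm ((w' : F') - b (φ w) w), hTmem w⟩ with hTdef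
    have hTlip : LipschitzWith ⟨κ * (σ * (1 + α)), by positivity⟩ T := by
      apply LipschitzWith.of_dist_le_mul
      intro w z
      simp only [Subtype.dist_eq, dist_eq_norm]
      have he : (T w : F) - (T z : F) = B.symm (b (φ z) z - b (φ w) w) := by
        simp only [hTdef, ← map_sub]
        congr 1
        abel
      rw [he]
      have h1 := hBsymm (b (φ z) z - b (φ w) w)
      have h2 := hb (φ z) (φ w) z w
      have h3 := hφ z w
      have h4 : ‖(z : F) - (w : F)‖ = ‖(w : F) - (z : F)‖ := norm_sub_rev _ _
      change ‖B.symm (b (φ z) z - b (φ w) w)‖ ≤ κ * (σ * (1 + α)) * ‖(w : F) - (z : F)‖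
      nlinarith [mul_le_mul_of_nonneg_left h2 hκ.le,
        mul_le_mul_of_nonneg_left h3 (mul_nonneg hκ.le hσ0),
        norm_nonneg ((w : F) - (z : F))]
    have hC : ContractingWith ⟨κ * (σ * (1 + α)), by positivity⟩ T :=
      ⟨by exact_mod_cast hκσ1, hTlip⟩
    set w := ContractingWith.fixedPoint T hC with hwdef
    have hfix : T w = w := hC.fixedPoint_isFixedPt
    have hfix' : (w : F) = B.symm ((w' : F') - b (φ w) w) := by
      conv_lhs => rw [← hfix]
    have h6 : B (w : F) = (w' : F') - b (φ w) w := by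
      rw [hfix']; exact B.apply_symm_apply _
    exact ⟨w, by rw [h6]; abel⟩
  choose η hη using hsurj
  have hηc : ∀ x y : {w' : F' // ‖w'‖ ≤ δ'},
      c * ‖(η x : F) - (η y : F)‖ ≤ ‖(x : F') - (y : F')‖ := by
    intro x y
    have := hGlow (η x) (η y)
    rwa [hη x, hη y] at this
  have hη0 : ∀ x : {w' : F' // ‖w'‖ ≤ δ'}, (x : F') = 0 → (η x : F) = 0 := by
    intro x hx
    have hG0 : B ((⟨0, hδF0⟩ : {w : F // ‖w‖ ≤ δ}) : F)
        + b (φ ⟨0, hδF0⟩) ⟨0, hδF0⟩ = 0 := by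
      rw [hb0 (φ ⟨0, hδF0⟩) ⟨0, hδF0⟩ hφz0 rfl]
      simp
    have h := hGlow (η x) ⟨0, hδF0⟩
    rw [hη x, hG0, hx] at h
    simp only [sub_zero, norm_zero] at h
    have h0 : ‖(η x : F)‖ = 0 := by
      have h1 : ‖(η x : F)‖ ≤ 0 := by nlinarith [norm_nonneg (η x : F)]
      exact le_antisymm h1 (norm_nonneg _)
    exact norm_eq_zero.mp h0
  have hψlip : ∀ x y : {w' : F' // ‖w'‖ ≤ δ'},
      ‖(A (φ (η x) : E) + a (φ (η x)) (η x))
        - (A (φ (η y) : E) + a (φ (η y)) (η y))‖ ≤ α * ‖(x : F') - (y : F')‖ := by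
    intro x y
    have he : (A (φ (η x) : E) + a (φ (η x)) (η x))
        - (A (φ (η y) : E) + a (φ (η y)) (η y))
        = A ((φ (η x) : E) - (φ (η y) : E))
          + (a (φ (η x)) (η x) - a (φ (η y)) (η y)) := by
      rw [map_sub]; abel
    rw [he]
    have h2 := norm_add_le (A ((φ (η x) : E) - (φ (η y) : E)))
      (a (φ (η x)) (η x) - a (φ (η y)) (η y))
    have h3 : ‖A ((φ (η x) : E) - (φ (η y) : E))‖ ≤
        μ * ‖(φ (η x) : E) - (φ (η y) : E)‖ :=
      le_trans (A.le_opNorm _) (mul_le_mul_of_nonneg_right hA (norm_nonneg _))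
    have h4 := ha (φ (η x)) (φ (η y)) (η x) (η y)
    have h5 := hφ (η x) (η y)
    have h6 := hηc x y
    nlinarith [mul_le_mul_of_nonneg_left h5 hμ, mul_le_mul_of_nonneg_left h5 hσ0,
      mul_le_mul_of_nonneg_left h6 hα0.le,
      mul_le_mul_of_nonneg_right hlip (norm_nonneg ((η x : F) - (η y : F)))]
  have hψ0 : ∀ x : {w' : F' // ‖w'‖ ≤ δ'}, (x : F') = 0 →
      A (φ (η x) : E) + a (φ (η x)) (η x) = 0 := by
    intro x hx
    have h1 := hη0 x hx
    have h2 := hφ0 (η x) h1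
    rw [h2, ha0 (φ (η x)) (η x) h2 h1]
    simp
  have hδ'F0 : ‖(0:F')‖ ≤ δ' := by simp [hδ'.le]
  have hψmem : ∀ x : {w' : F' // ‖w'‖ ≤ δ'},
      ‖A (φ (η x) : E) + a (φ (η x)) (η x)‖ ≤ δ' := by
    intro x
    have h1 := hψlip x ⟨0, hδ'F0⟩
    rw [hψ0 ⟨0, hδ'F0⟩ rfl] at h1
    simp only [sub_zero] at h1
    have hx := x.2
    nlinarith [norm_nonneg (x : F')]
  refine ⟨fun x => ⟨A (φ (η x) : E) + a (φ (η x)) (η x), hψmem x⟩,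
    fun x hx => hψ0 x hx, fun x y => hψlip x y, ?_⟩
  ext p
  simp only [Set.mem_setOf_eq]
  constructor
  · rintro ⟨⟨w, rfl⟩, h1, h2⟩
    simp only at h1 h2
    refine ⟨⟨B (w : F) + b (φ w) w, h2⟩, ?_⟩
    have hweq : w = η ⟨B (w : F) + b (φ w) w, h2⟩ := by
      have h3 := hGlow w (η ⟨B (w : F) + b (φ w) w, h2⟩)
      rw [hη ⟨B (w : F) + b (φ w) w, h2⟩] at h3
      simp only [sub_self, norm_zero] at h3
      have h4 : ‖(w : F) - (η ⟨B (w : F) + b (φ w) w, h2⟩ : F)‖ = 0 :=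
        le_antisymm (by nlinarith [norm_nonneg ((w : F) - (η ⟨B (w : F) + b (φ w) w, h2⟩ : F))]) (norm_nonneg _)
      exact Subtype.ext (sub_eq_zero.mp (norm_eq_zero.mp h4))
    have hfst := congrArg
      (fun z : {w : F // ‖w‖ ≤ δ} => A (φ z : E) + a (φ z) z) hweq
    simp only [Prod.mk.injEq]
    exact ⟨hfst, trivial⟩
  · rintro ⟨x, rfl⟩
    refine ⟨⟨η x, ?_⟩, ?_, ?_⟩
    · simp only [Prod.mk.injEq]
      exact ⟨trivial, (hη x).symm⟩
    · simpa using hψmem x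
    · simpa using x.2
end

section
/- Let α, γ ∈ (0,1). For each n ∈ ℤ let E_n and F_n be real Banach spaces, let A_n : E_n → E_{n+1} be continuous linear with ‖A_n‖ ≤ μ_n, and let B_n : F_n ≃ F_{n+1} be a continuous linear equivalence with ‖B_n⁻¹‖ ≤ κ_n, where μ_n ≥ 0, κ_n > 0 and μ_n < γ·κ_n⁻¹. Let (δ_n)_{n∈ℤ} be positive reals with δ_{n+1} ≤ ((κ_n⁻¹ + α·μ_n)/(1+α))·δ_n for every n ∈ ℤ. Let a_n : B_{E_n}(δ_n) × B_{F_n}(δ_n) → E_{n+1} and b_n : B_{E_n}(δ_n) × B_{F_n}(δ_n) → F_{n+1} satisfy a_n(0,0) = 0, b_n(0,0) = 0, ‖a_n(v,w) − a_n(v′,w′)‖ ≤ σ_n·(‖v−v′‖ + ‖w−w′‖) and ‖b_n(v,w) − b_n(v′,w′)‖ ≤ σ_n·(‖v−v′‖ + ‖w−w′‖), where 0 ≤ σ_n ≤ min{(κ_n⁻¹ − μ_n)·α/(1+α)², (γ·κ_n⁻¹ − μ_n)/((1+α)(1+γ))}, and define f_n(v,w) = (A_n(v) + a_n(v,w), B_n(w)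 + b_n(v,w)). Then there exists a unique family (φ_n)_{n∈ℤ} such that each φ_n : B_{F_n}(δ_n) → B_{E_n}(δ_n) is α-Lipschitz with φ_n(0) = 0, and for every n ∈ ℤ, {f_n(φ_n(w), w) : w ∈ B_{F_n}(δ_n)} ∩ (B_{E_{n+1}}(δ_{n+1}) × B_{F_{n+1}}(δ_{n+1})) = {(φ_{n+1}(w′), w′) : w′ ∈ B_{F_{n+1}}(δ_{n+1})}; in particular the graph of φ_{n+1} is contained in f_n applied to the graph of φ_n. -/
open Filter Topology

structure HPData (α γ : ℝ) (E F : ℤ → Type*)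
    [∀ n, NormedAddCommGroup (E n)] [∀ n, NormedSpace ℝ (E n)] [∀ n, CompleteSpace (E n)]
    [∀ n, NormedAddCommGroup (F n)] [∀ n, NormedSpace ℝ (F n)] [∀ n, CompleteSpace (F n)]
    where
  hα0 : 0 < α
  hα1 : α < 1
  hγ0 : 0 < γ
  hγ1 : γ < 1
  A : ∀ n : ℤ, E n →L[ℝ] E (n + 1)
  B : ∀ n : ℤ, F n ≃L[ℝ] F (n + 1)
  μ : ℤ → ℝ
  κ : ℤ → ℝ
  hμ : ∀ n, 0 ≤ μ n
  hκ : ∀ n, 0 < κ n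
  hμκ : ∀ n, μ n < γ * (κ n)⁻¹
  hA : ∀ n, ‖A n‖ ≤ μ n
  hB : ∀ n, ‖((B n).symm : F (n + 1) →L[ℝ] F n)‖ ≤ κ n
  δ : ℤ → ℝ
  hδ : ∀ n, 0 < δ n
  hδδ : ∀ n, δ (n + 1) ≤ (((κ n)⁻¹ + α * μ n) / (1 + α)) * δ n
  a : ∀ n : ℤ, {v : E n // ‖v‖ ≤ δ n} → {w : F n // ‖w‖ ≤ δ n} → E (n + 1)
  b : ∀ n : ℤ, {v : E n // ‖v‖ ≤ δ n} → {w : F n // ‖w‖ ≤ δ n} → F (n + 1)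
  σ : ℤ → ℝ
  hσ0 : ∀ n, 0 ≤ σ n
  hσ : ∀ n, σ n ≤ min (((κ n)⁻¹ - μ n) * α / (1 + α) ^ 2)
      ((γ * (κ n)⁻¹ - μ n) / ((1 + α) * (1 + γ)))
  ha0 : ∀ (n : ℤ) (v : {v : E n // ‖v‖ ≤ δ n}) (w : {w : F n // ‖w‖ ≤ δ n}),
      (v : E n) = 0 → (w : F n) = 0 → a n v w = 0
  hb0 : ∀ (n : ℤ) (v : {v : E n // ‖v‖ ≤ δ n}) (w : {w : F n // ‖w‖ ≤ δ n}),
      (v : E n) = 0 → (w : F n) = 0 → b n v w = 0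
  ha : ∀ (n : ℤ) (v v' : {v : E n // ‖v‖ ≤ δ n}) (w w' : {w : F n // ‖w‖ ≤ δ n}),
      ‖a n v w - a n v' w'‖ ≤ σ n * (‖(v : E n) - (v' : E n)‖ + ‖(w : F n) - (w' : F n)‖)
  hb : ∀ (n : ℤ) (v v' : {v : E n // ‖v‖ ≤ δ n}) (w w' : {w : F n // ‖w‖ ≤ δ n}),
      ‖b n v w - b n v' w'‖ ≤ σ n * (‖(v : E n) - (v' : E n)‖ + ‖(w : F n) - (w' : F n)‖)

namespace HPData

variable {α γ : ℝ} {E F : ℤ → Type*}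
    [∀ n, NormedAddCommGroup (E n)] [∀ n, NormedSpace ℝ (E n)] [∀ n, CompleteSpace (E n)]
    [∀ n, NormedAddCommGroup (F n)] [∀ n, NormedSpace ℝ (F n)] [∀ n, CompleteSpace (F n)]
    (D : HPData α γ E F)

lemma κinv_pos (n : ℤ) : 0 < (D.κ n)⁻¹ := inv_pos.2 (D.hκ n)

lemma hμκ' (n : ℤ) : D.μ n < (D.κ n)⁻¹ :=
  (D.hμκ n).trans_le (by nlinarith [D.κinv_pos n, D.hγ1])

/-- σ (1+α)² ≤ α (κ⁻¹ - μ) -/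
lemma ar1 (n : ℤ) : D.σ n * (1 + α) * (1 + α) ≤ α * ((D.κ n)⁻¹ - D.μ n) := by
  have h := (D.hσ n).trans (min_le_left _ _)
  have h1 : (0:ℝ) < 1 + α := by linarith [D.hα0]
  rw [le_div_iff₀ (by positivity)] at h
  nlinarith [h]

/-- σ (1+α)(1+γ) ≤ γ κ⁻¹ - μ -/
lemma ar2 (n : ℤ) : D.σ n * (1 + α) * (1 + γ) ≤ γ * (D.κ n)⁻¹ - D.μ n := by
  have h := (D.hσ n).trans (min_le_right _ _)
  have h1 : (0:ℝ) < (1 + α) * (1 + γ) := by nlinarith [D.hα0, D.hγ0]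
  rw [le_div_iff₀ h1] at h
  nlinarith [h]

lemma ar6 (n : ℤ) : D.σ n * (1 + α) < (D.κ n)⁻¹ := by
  nlinarith [D.ar1 n, D.hα0, D.hα1, D.hμ n, D.κinv_pos n, D.hμκ' n, D.hσ0 n]

lemma ar3 (n : ℤ) : D.κ n * (D.σ n * (1 + α)) ≤ γ := by
  have h := D.ar2 n
  have hk := D.hκ n
  have hki := mul_inv_cancel₀ (ne_of_gt hk)
  nlinarith [D.hμ n, D.hγ0, D.hσ0 n, D.hα0]

lemma ar4 (n : ℤ) : D.μ n * α + D.σ n * (1 + α) ≤ α * ((D.κ n)⁻¹ - D.σ n * (1 + α)) := by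
  nlinarith [D.ar1 n]

lemma ar5 (n : ℤ) : D.μ n + D.σ n * (1 + α) ≤ γ * ((D.κ n)⁻¹ - D.σ n * (1 + α)) := by
  nlinarith [D.ar2 n, D.hγ0, D.hσ0 n, D.hα0]

lemma ar7 (n : ℤ) : D.κ n * (D.δ (n+1) + D.σ n * (1 + α) * D.δ n) ≤ D.δ n := by
  have h := D.hδδ n
  have h1 : (0:ℝ) < 1 + α := by linarith [D.hα0]
  rw [div_mul_eq_mul_div, le_div_iff₀ h1] at h
  have hki := mul_inv_cancel₀ (ne_of_gt (D.hκ n))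
  have h2 : (1+α) * (D.δ (n+1) + D.σ n * (1+α) * D.δ n) ≤ (1+α) * ((D.κ n)⁻¹ * D.δ n) := by
    nlinarith [mul_le_mul_of_nonneg_right (D.ar1 n) (D.hδ n).le]
  have h3 : D.δ (n+1) + D.σ n * (1+α) * D.δ n ≤ (D.κ n)⁻¹ * D.δ n :=
    le_of_mul_le_mul_left h2 h1
  calc D.κ n * (D.δ (n+1) + D.σ n * (1+α) * D.δ n) ≤ D.κ n * ((D.κ n)⁻¹ * D.δ n) :=
        mul_le_mul_of_nonneg_left h3 (D.hκ n).le
    _ = D.δ n := by rw [← mul_assoc, hki, one_mul]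


/-- the closed ball in `F n` -/
abbrev BF (n : ℤ) := {w : F n // ‖w‖ ≤ D.δ n}
/-- the closed ball in `E n` -/
abbrev BE (n : ℤ) := {v : E n // ‖v‖ ≤ D.δ n}

/-- zero element of the ball -/
def wz (n : ℤ) : D.BF n := ⟨0, by simpa using (D.hδ n).le⟩

def Good (n : ℤ) (f : D.BF n → D.BE n) : Prop :=
  (∀ w : D.BF n, (w : F n) = 0 → ((f w : E n) = 0)) ∧
  ∀ w z : D.BF n, ‖(f w : E n) - (f z : E n)‖ ≤ α * ‖(w : F n) - (z : F n)‖

def Gam (n : ℤ) := {f : D.BF n → D.BE n // D.Good n f}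

variable {n : ℤ}

lemma good_zero (f : D.Gam n) : ((f.1 (D.wz n) : E n)) = 0 := f.2.1 _ rfl

lemma wz_coe : ((D.wz n : F n)) = 0 := rfl

lemma good_norm (f : D.Gam n) (w : D.BF n) : ‖(f.1 w : E n)‖ ≤ α * ‖(w : F n)‖ := by
  have h := f.2.2 w (D.wz n)
  rw [D.good_zero f, D.wz_coe, sub_zero, sub_zero] at h
  exact h

/-- image (second) component of `fₙ` on the graph of `f` -/
def img (f : D.Gam n) (w : D.BF n) : F (n + 1) := D.B n (w : F n) + D.b n (f.1 w) w
/-- value (first) component of `fₙ` on the graph of `f` -/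
def val (f : D.Gam n) (w : D.BF n) : E (n + 1) := D.A n (f.1 w : E n) + D.a n (f.1 w) w

lemma b_diff (f g : D.Gam n) (w z : D.BF n) :
    ‖D.b n (f.1 w) w - D.b n (g.1 z) z‖ ≤
      D.σ n * (‖(f.1 w : E n) - (g.1 z : E n)‖ + ‖(w : F n) - (z : F n)‖) := D.hb n _ _ _ _

lemma b_norm (f : D.Gam n) (w : D.BF n) :
    ‖D.b n (f.1 w) w‖ ≤ D.σ n * (1 + α) * ‖(w : F n)‖ := by
  have h0 : D.b n (f.1 (D.wz n)) (D.wz n) = 0 := D.hb0 n _ _ (D.good_zero f) rfl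
  have h := D.b_diff f f w (D.wz n)
  rw [h0, sub_zero, D.good_zero f, D.wz_coe, sub_zero, sub_zero] at h
  have h2 := D.good_norm f w
  calc ‖D.b n (f.1 w) w‖ ≤ D.σ n * (‖(f.1 w : E n)‖ + ‖(w : F n)‖) := h
    _ ≤ D.σ n * (α * ‖(w : F n)‖ + ‖(w : F n)‖) := by
        refine mul_le_mul_of_nonneg_left (add_le_add_left ?_ _) (D.hσ0 n)
        simpa using h2
    _ = D.σ n * (1 + α) * ‖(w : F n)‖ := by ring

lemma B_lower (w z : F n) : (D.κ n)⁻¹ * ‖w - z‖ ≤ ‖D.B n w - D.B n z‖ := by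
  have h : ‖w - z‖ ≤ D.κ n * ‖D.B n w - D.B n z‖ := by
    have := ((D.B n).symm : F (n+1) →L[ℝ] F n).le_of_opNorm_le (D.hB n)
      (D.B n w - D.B n z)
    simpa [map_sub] using this
  calc (D.κ n)⁻¹ * ‖w - z‖ ≤ (D.κ n)⁻¹ * (D.κ n * ‖D.B n w - D.B n z‖) :=
        mul_le_mul_of_nonneg_left h (D.κinv_pos n).le
    _ = ‖D.B n w - D.B n z‖ := by
        rw [← mul_assoc, inv_mul_cancel₀ (ne_of_gt (D.hκ n)), one_mul]

lemma img_lower (f : D.Gam n) (w z : D.BF n) :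
    ((D.κ n)⁻¹ - D.σ n * (1 + α)) * ‖(w : F n) - (z : F n)‖ ≤ ‖D.img f w - D.img f z‖ := by
  have hB := D.B_lower (w : F n) (z : F n)
  have hb := D.b_diff f f w z
  have hlip := f.2.2 w z
  have hσ := D.hσ0 n
  have htri : ‖D.B n (w:F n) - D.B n (z:F n)‖ - ‖D.b n (f.1 w) w - D.b n (f.1 z) z‖ ≤
      ‖D.img f w - D.img f z‖ := by
    have := norm_sub_le (D.img f w - D.img f z) (D.b n (f.1 w) w - D.b n (f.1 z) z)
    have he : D.img f w - D.img f z - (D.b n (f.1 w) w - D.b n (f.1 z) z)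
        = D.B n (w:F n) - D.B n (z:F n) := by
      simp only [img]; abel
    rw [he] at this
    linarith [this]
  have hble : ‖D.b n (f.1 w) w - D.b n (f.1 z) z‖ ≤ D.σ n * (1+α) * ‖(w:F n) - (z:F n)‖ := by
    calc ‖D.b n (f.1 w) w - D.b n (f.1 z) z‖
        ≤ D.σ n * (‖(f.1 w : E n) - (f.1 z : E n)‖ + ‖(w:F n) - (z:F n)‖) := hb
      _ ≤ D.σ n * (α * ‖(w:F n) - (z:F n)‖ + ‖(w:F n) - (z:F n)‖) :=
          mul_le_mul_of_nonneg_left (add_le_add_left hlip _) hσ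
      _ = D.σ n * (1+α) * ‖(w:F n) - (z:F n)‖ := by ring
  nlinarith [htri, hble, hB]

lemma img_inj (f : D.Gam n) {w z : D.BF n} (h : D.img f w = D.img f z) : w = z := by
  have h1 := D.img_lower f w z
  rw [h, sub_self, norm_zero] at h1
  have h2 : (0:ℝ) < (D.κ n)⁻¹ - D.σ n * (1 + α) := sub_pos.2 (D.ar6 n)
  have h3 : ‖(w : F n) - (z : F n)‖ ≤ 0 := by
    by_contra hc
    push_neg at hc
    nlinarith
  have h4 : (w : F n) = (z : F n) := by
    rwa [← sub_eq_zero, ← norm_le_zero_iff]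
  exact Subtype.ext h4

lemma val_lip (f : D.Gam n) (w z : D.BF n) :
    ‖D.val f w - D.val f z‖ ≤
      (D.μ n * α + D.σ n * (1 + α)) * ‖(w : F n) - (z : F n)‖ := by
  have hlip := f.2.2 w z
  have hA : ‖D.A n (f.1 w : E n) - D.A n (f.1 z : E n)‖ ≤
      D.μ n * (α * ‖(w:F n) - (z:F n)‖) := by
    rw [← map_sub]
    calc ‖D.A n ((f.1 w : E n) - (f.1 z : E n))‖
        ≤ D.μ n * ‖(f.1 w : E n) - (f.1 z : E n)‖ := (D.A n).le_of_opNorm_le (D.hA n) _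
      _ ≤ D.μ n * (α * ‖(w:F n) - (z:F n)‖) := mul_le_mul_of_nonneg_left hlip (D.hμ n)
  have ha : ‖D.a n (f.1 w) w - D.a n (f.1 z) z‖ ≤
      D.σ n * (1 + α) * ‖(w:F n) - (z:F n)‖ := by
    calc ‖D.a n (f.1 w) w - D.a n (f.1 z) z‖
        ≤ D.σ n * (‖(f.1 w : E n) - (f.1 z : E n)‖ + ‖(w:F n) - (z:F n)‖) := D.ha n _ _ _ _
      _ ≤ D.σ n * (α * ‖(w:F n) - (z:F n)‖ + ‖(w:F n) - (z:F n)‖) :=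
          mul_le_mul_of_nonneg_left (add_le_add_left hlip _) (D.hσ0 n)
      _ = D.σ n * (1+α) * ‖(w:F n) - (z:F n)‖ := by ring
  calc ‖D.val f w - D.val f z‖
      ≤ ‖D.A n (f.1 w : E n) - D.A n (f.1 z : E n)‖ + ‖D.a n (f.1 w) w - D.a n (f.1 z) z‖ := by
        have he : D.val f w - D.val f z =
            (D.A n (f.1 w : E n) - D.A n (f.1 z : E n)) +
            (D.a n (f.1 w) w - D.a n (f.1 z) z) := by simp only [val]; abel
        rw [he]; exact norm_add_le _ _
    _ ≤ (D.μ n * α + D.σ n * (1 + α)) * ‖(w : F n) - (z : F n)‖ := by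
        rw [add_mul]; exact add_le_add (by linarith [hA]) ha

lemma val_lip_img (f : D.Gam n) (w z : D.BF n) :
    ‖D.val f w - D.val f z‖ ≤ α * ‖D.img f w - D.img f z‖ := by
  calc ‖D.val f w - D.val f z‖
      ≤ (D.μ n * α + D.σ n * (1 + α)) * ‖(w : F n) - (z : F n)‖ := D.val_lip f w z
    _ ≤ α * (((D.κ n)⁻¹ - D.σ n * (1 + α)) * ‖(w : F n) - (z : F n)‖) := by
        rw [← mul_assoc]
        exact mul_le_mul_of_nonneg_right (D.ar4 n) (norm_nonneg _)
    _ ≤ α * ‖D.img f w - D.img f z‖ :=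
        mul_le_mul_of_nonneg_left (D.img_lower f w z) (D.hα0).le

lemma img_zero (f : D.Gam n) : D.img f (D.wz n) = 0 := by
  have h0 : D.b n (f.1 (D.wz n)) (D.wz n) = 0 := D.hb0 n _ _ (D.good_zero f) rfl
  rw [img, h0, add_zero, D.wz_coe, map_zero]

lemma val_zero (f : D.Gam n) : D.val f (D.wz n) = 0 := by
  have h0 : D.a n (f.1 (D.wz n)) (D.wz n) = 0 := D.ha0 n _ _ (D.good_zero f) rfl
  rw [val, h0, add_zero, D.good_zero f, map_zero]


instance (n : ℤ) : Nonempty (D.BF n) := ⟨D.wz n⟩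

instance (n : ℤ) : CompleteSpace (D.BF n) :=
  (isClosed_le (continuous_norm (E := F n)) continuous_const).completeSpace_coe

/-- the auxiliary contraction whose fixed point is the preimage of `w'` on the graph -/
def preT (f : D.Gam n) (w' : D.BF (n+1)) (w : D.BF n) : D.BF n :=
  ⟨(D.B n).symm ((w' : F (n+1)) - D.b n (f.1 w) w), by
    have h1 : ‖(D.B n).symm ((w' : F (n+1)) - D.b n (f.1 w) w)‖ ≤
        D.κ n * ‖(w' : F (n+1)) - D.b n (f.1 w) w‖ :=
      ((D.B n).symm : F (n+1) →L[ℝ] F n).le_of_opNorm_le (D.hB n) _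
    have h2 : ‖(w' : F (n+1)) - D.b n (f.1 w) w‖ ≤ D.δ (n+1) + D.σ n * (1+α) * D.δ n := by
      calc ‖(w' : F (n+1)) - D.b n (f.1 w) w‖
          ≤ ‖(w' : F (n+1))‖ + ‖D.b n (f.1 w) w‖ := norm_sub_le _ _
        _ ≤ D.δ (n+1) + D.σ n * (1+α) * D.δ n := by
            refine add_le_add w'.2 ((D.b_norm f w).trans ?_)
            refine mul_le_mul_of_nonneg_left w.2 ?_
            have := D.hσ0 n; have := D.hα0; positivity
    calc ‖(D.B n).symm ((w' : F (n+1)) - D.b n (f.1 w) w)‖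
        ≤ D.κ n * (D.δ (n+1) + D.σ n * (1+α) * D.δ n) :=
          h1.trans (mul_le_mul_of_nonneg_left h2 (D.hκ n).le)
      _ ≤ D.δ n := D.ar7 n⟩

lemma preT_contracting (f : D.Gam n) (w' : D.BF (n+1)) :
    ContractingWith ⟨γ, D.hγ0.le⟩ (D.preT f w') := by
  constructor
  · exact_mod_cast D.hγ1
  · refine LipschitzWith.of_dist_le_mul fun w z => ?_
    rw [Subtype.dist_eq, Subtype.dist_eq, dist_eq_norm, dist_eq_norm]
    have he : (D.preT f w' w : F n) - (D.preT f w' z : F n) =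
        (D.B n).symm (D.b n (f.1 z) z - D.b n (f.1 w) w) := by
      show (D.B n).symm _ - (D.B n).symm _ = _
      rw [← map_sub]
      congr 1
      abel
    rw [he]
    have h1 : ‖(D.B n).symm (D.b n (f.1 z) z - D.b n (f.1 w) w)‖ ≤
        D.κ n * ‖D.b n (f.1 z) z - D.b n (f.1 w) w‖ :=
      ((D.B n).symm : F (n+1) →L[ℝ] F n).le_of_opNorm_le (D.hB n) _
    have h2 : ‖D.b n (f.1 z) z - D.b n (f.1 w) w‖ ≤
        D.σ n * (1 + α) * ‖(z : F n) - (w : F n)‖ := by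
      calc ‖D.b n (f.1 z) z - D.b n (f.1 w) w‖
          ≤ D.σ n * (‖(f.1 z : E n) - (f.1 w : E n)‖ + ‖(z : F n) - (w : F n)‖) :=
            D.b_diff f f z w
        _ ≤ D.σ n * (α * ‖(z : F n) - (w : F n)‖ + ‖(z : F n) - (w : F n)‖) :=
            mul_le_mul_of_nonneg_left (add_le_add_left (f.2.2 z w) _) (D.hσ0 n)
        _ = D.σ n * (1 + α) * ‖(z : F n) - (w : F n)‖ := by ring
    have h3 : ‖(z : F n) - (w : F n)‖ = ‖(w : F n) - (z : F n)‖ := norm_sub_rev _ _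
    calc ‖(D.B n).symm (D.b n (f.1 z) z - D.b n (f.1 w) w)‖
        ≤ D.κ n * (D.σ n * (1 + α) * ‖(w : F n) - (z : F n)‖) := by
          rw [← h3]
          exact h1.trans (mul_le_mul_of_nonneg_left h2 (D.hκ n).le)
      _ ≤ γ * ‖(w : F n) - (z : F n)‖ := by
          rw [← mul_assoc]
          exact mul_le_mul_of_nonneg_right
            (D.ar3 n) (norm_nonneg _)

/-- the unique preimage in the ball of `w'` under the graph map -/
noncomputable def chi (f : D.Gam n) (w' : D.BF (n+1)) : D.BF n :=
  ContractingWith.fixedPoint (D.preT f w') (D.preT_contracting f w')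

lemma chi_spec (f : D.Gam n) (w' : D.BF (n+1)) :
    D.img f (D.chi f w') = (w' : F (n+1)) := by
  have h : D.preT f w' (D.chi f w') = D.chi f w' :=
    (D.preT_contracting f w').fixedPoint_isFixedPt
  have h1 : (D.B n).symm ((w' : F (n+1)) - D.b n (f.1 (D.chi f w')) (D.chi f w'))
      = ((D.chi f w' : F n)) := congrArg Subtype.val h
  have h2 := congrArg (D.B n) h1
  rw [(D.B n).apply_symm_apply] at h2
  rw [img, ← h2]
  abel

lemma chi_unique (f : D.Gam n) (w' : D.BF (n+1)) {w : D.BF n}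
    (h : D.img f w = (w' : F (n+1))) : w = D.chi f w' :=
  D.img_inj f (by rw [h, D.chi_spec])

/-- the graph transform at one level -/
noncomputable def Tr (f : D.Gam n) : D.Gam (n+1) := by
  refine ⟨fun w' => ⟨D.val f (D.chi f w'), ?_⟩, ?_, ?_⟩
  · have h := D.val_lip_img f (D.chi f w') (D.wz n)
    rw [D.val_zero f, D.img_zero f, sub_zero, sub_zero, D.chi_spec] at h
    calc ‖D.val f (D.chi f w')‖ ≤ α * ‖(w' : F (n+1))‖ := h
      _ ≤ 1 * D.δ (n+1) :=
          mul_le_mul (D.hα1).le w'.2 (norm_nonneg _) zero_le_one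
      _ = D.δ (n+1) := one_mul _
  · intro w' hw'
    have hz : D.chi f w' = D.wz n := by
      refine (D.chi_unique f w' ?_).symm
      rw [D.img_zero f, hw']
    show D.val f (D.chi f w') = 0
    rw [hz, D.val_zero f]
  · intro w' z'
    show ‖D.val f (D.chi f w') - D.val f (D.chi f z')‖ ≤ _
    have h := D.val_lip_img f (D.chi f w') (D.chi f z')
    rwa [D.chi_spec, D.chi_spec] at h


lemma Tr_apply (f : D.Gam n) (w' : D.BF (n+1)) :
    ((D.Tr f).1 w' : E (n+1)) = D.val f (D.chi f w') := rfl

/-- the key contraction estimate for the graph transform -/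
lemma Tr_contr {C : ℝ} (hC : 0 ≤ C) (f g : D.Gam n)
    (h : ∀ w : D.BF n, ‖(f.1 w : E n) - (g.1 w : E n)‖ ≤ C * ‖(w : F n)‖) :
    ∀ w' : D.BF (n+1),
      ‖((D.Tr f).1 w' : E (n+1)) - ((D.Tr g).1 w' : E (n+1))‖ ≤ γ * C * ‖(w' : F (n+1))‖ := by
  intro w'
  set w := D.chi f w' with hw
  rw [D.Tr_apply, D.Tr_apply, ← hw]
  have hfw : ‖(f.1 w : E n) - (g.1 w : E n)‖ ≤ C * ‖(w : F n)‖ := h w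
  -- second term : ‖val g w - val g (chi g w')‖ ≤ α * σ * (‖f w - g w‖)
  have h2 : ‖D.val g w - D.val g (D.chi g w')‖ ≤ α * (D.σ n * ‖(f.1 w : E n) - (g.1 w : E n)‖) := by
    have := D.val_lip_img g w (D.chi g w')
    rw [D.chi_spec g w'] at this
    refine this.trans (mul_le_mul_of_nonneg_left ?_ (D.hα0).le)
    have he : D.img g w - (w' : F (n+1)) = D.b n (g.1 w) w - D.b n (f.1 w) w := by
      rw [← D.chi_spec f w', ← hw]
      simp only [img]
      abel
    rw [he]
    have := D.hb n (g.1 w) (f.1 w) w w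
    simpa [norm_sub_rev ((f.1 w : E n))] using this
  -- first term : ‖val f w - val g w‖ ≤ (μ + σ) ‖f w - g w‖
  have h1 : ‖D.val f w - D.val g w‖ ≤ (D.μ n + D.σ n) * ‖(f.1 w : E n) - (g.1 w : E n)‖ := by
    have hA : ‖D.A n (f.1 w : E n) - D.A n (g.1 w : E n)‖ ≤
        D.μ n * ‖(f.1 w : E n) - (g.1 w : E n)‖ := by
      rw [← map_sub]
      exact (D.A n).le_of_opNorm_le (D.hA n) _
    have ha : ‖D.a n (f.1 w) w - D.a n (g.1 w) w‖ ≤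
        D.σ n * ‖(f.1 w : E n) - (g.1 w : E n)‖ := by
      have := D.ha n (f.1 w) (g.1 w) w w
      simpa using this
    have he : D.val f w - D.val g w =
        (D.A n (f.1 w : E n) - D.A n (g.1 w : E n)) + (D.a n (f.1 w) w - D.a n (g.1 w) w) := by
      simp only [val]; abel
    rw [he, add_mul]
    exact (norm_add_le _ _).trans (add_le_add hA ha)
  -- lower bound for ‖w'‖
  have h3 : ((D.κ n)⁻¹ - D.σ n * (1 + α)) * ‖(w : F n)‖ ≤ ‖(w' : F (n+1))‖ := by
    have := D.img_lower f w (D.wz n)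
    rwa [D.img_zero f, sub_zero, D.wz_coe, sub_zero, hw, D.chi_spec f w'] at this
  have htri : ‖D.val f w - D.val g (D.chi g w')‖ ≤
      ‖D.val f w - D.val g w‖ + ‖D.val g w - D.val g (D.chi g w')‖ := norm_sub_le_norm_sub_add_norm_sub _ _ _
  have hcw : 0 ≤ C * ‖(w : F n)‖ := mul_nonneg hC (norm_nonneg _)
  calc ‖D.val f w - D.val g (D.chi g w')‖
      ≤ (D.μ n + D.σ n) * ‖(f.1 w : E n) - (g.1 w : E n)‖ +
        α * (D.σ n * ‖(f.1 w : E n) - (g.1 w : E n)‖) := htri.trans (add_le_add h1 h2)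
    _ = (D.μ n + D.σ n * (1 + α)) * ‖(f.1 w : E n) - (g.1 w : E n)‖ := by ring
    _ ≤ (D.μ n + D.σ n * (1 + α)) * (C * ‖(w : F n)‖) := by
        refine mul_le_mul_of_nonneg_left hfw ?_
        have h4 := D.hμ n; have h5 := D.hσ0 n; have h6 := D.hα0
        positivity
    _ ≤ γ * ((D.κ n)⁻¹ - D.σ n * (1 + α)) * (C * ‖(w : F n)‖) :=
        mul_le_mul_of_nonneg_right (D.ar5 n) hcw
    _ = γ * C * (((D.κ n)⁻¹ - D.σ n * (1 + α)) * ‖(w : F n)‖) := by ring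
    _ ≤ γ * C * ‖(w' : F (n+1))‖ := by
        refine mul_le_mul_of_nonneg_left h3 ?_
        exact mul_nonneg (D.hγ0).le hC

/-- families of good graphs -/
def GAll := ∀ n : ℤ, D.Gam n

def shiftG {m k : ℤ} (h : m = k) : D.Gam m → D.Gam k := fun f => h ▸ f

lemma shiftG_family {m k : ℤ} (h : m = k) (ψ : D.GAll) : D.shiftG h (ψ m) = ψ k := by
  subst h; rfl

lemma shiftG_Tr {m k : ℤ} (h : m = k) (h2 : m + 1 = k + 1) (f : D.Gam m) (g : D.Gam k)
    (hfg : D.shiftG h f = g) : D.shiftG h2 (D.Tr f) = D.Tr g := by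
  subst h
  subst hfg
  rfl

lemma shiftG_norm {m k : ℤ} (h : m = k) (f g : D.Gam m) (c : ℝ)
    (hfg : ∀ w : D.BF m, ‖(f.1 w : E m) - (g.1 w : E m)‖ ≤ c * ‖(w : F m)‖) :
    ∀ w : D.BF k, ‖((D.shiftG h f).1 w : E k) - ((D.shiftG h g).1 w : E k)‖ ≤ c * ‖(w : F k)‖ := by
  subst h; exact hfg

/-- graph transform on families -/
noncomputable def GT (φ : D.GAll) : D.GAll := fun n =>
  D.shiftG (show n - 1 + 1 = n by omega) (D.Tr (φ (n - 1)))

lemma GT_succ (φ : D.GAll) (n : ℤ) : D.GT φ (n + 1) = D.Tr (φ n) := by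
  refine D.shiftG_Tr (show n + 1 - 1 = n by omega) _ _ _ ?_
  exact D.shiftG_family _ φ

lemma GT_contr {C : ℝ} (hC : 0 ≤ C) (φ ψ : D.GAll)
    (h : ∀ (n : ℤ) (w : D.BF n), ‖((φ n).1 w : E n) - ((ψ n).1 w : E n)‖ ≤ C * ‖(w : F n)‖) :
    ∀ (n : ℤ) (w : D.BF n),
      ‖((D.GT φ n).1 w : E n) - ((D.GT ψ n).1 w : E n)‖ ≤ γ * C * ‖(w : F n)‖ := fun n =>
  D.shiftG_norm _ _ _ _ (D.Tr_contr hC (φ (n-1)) (ψ (n-1)) (h (n-1)))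


/-- the zero family -/
def phi0 : D.GAll := fun n =>
  ⟨fun _ => ⟨0, by simpa using (D.hδ n).le⟩, fun _ _ => rfl, fun w z => by
    simp only [sub_self, norm_zero]
    exact mul_nonneg D.hα0.le (norm_nonneg _)⟩

/-- iterates of the graph transform -/
noncomputable def iter : ℕ → D.GAll := fun k =>
  Nat.rec D.phi0 (fun _ ih => D.GT ih) k

lemma iter_bound : ∀ (k : ℕ) (n : ℤ) (w : D.BF n),
    ‖((D.iter (k+1) n).1 w : E n) - ((D.iter k n).1 w : E n)‖ ≤ α * γ ^ k * ‖(w : F n)‖ := by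
  intro k
  induction k with
  | zero =>
      intro n w
      have h0 : ((D.iter 0 n).1 w : E n) = 0 := rfl
      rw [h0, sub_zero, pow_zero, mul_one]
      exact D.good_norm (D.iter 1 n) w
  | succ k ih =>
      intro n w
      have h := D.GT_contr (C := α * γ ^ k)
        (mul_nonneg D.hα0.le (pow_nonneg D.hγ0.le k)) _ _ ih n w
      have he : γ * (α * γ ^ k) * ‖(w : F n)‖ = α * γ ^ (k+1) * ‖(w : F n)‖ := by ring
      rw [← he]
      exact h

lemma iter_dist (n : ℤ) (w : D.BF n) (k : ℕ) :
    dist ((D.iter k n).1 w : E n) ((D.iter (k+1) n).1 w : E n) ≤ (α * ‖(w : F n)‖) * γ ^ k := by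
  rw [dist_eq_norm, norm_sub_rev]
  calc ‖((D.iter (k+1) n).1 w : E n) - ((D.iter k n).1 w : E n)‖
      ≤ α * γ ^ k * ‖(w : F n)‖ := D.iter_bound k n w
    _ = (α * ‖(w : F n)‖) * γ ^ k := by ring

lemma iter_cauchy (n : ℤ) (w : D.BF n) :
    CauchySeq (fun k => ((D.iter k n).1 w : E n)) :=
  cauchySeq_of_le_geometric γ (α * ‖(w : F n)‖) D.hγ1 (D.iter_dist n w)

/-- the pointwise limit of the iterates -/
noncomputable def plim (n : ℤ) (w : D.BF n) : E n :=
  (cauchySeq_tendsto_of_complete (D.iter_cauchy n w)).choose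

lemma plim_spec (n : ℤ) (w : D.BF n) :
    Tendsto (fun k => ((D.iter k n).1 w : E n)) atTop (𝓝 (D.plim n w)) :=
  (cauchySeq_tendsto_of_complete (D.iter_cauchy n w)).choose_spec

lemma plim_norm (n : ℤ) (w : D.BF n) : ‖D.plim n w‖ ≤ D.δ n :=
  le_of_tendsto' (D.plim_spec n w).norm fun k => ((D.iter k n).1 w).2

lemma plim_zero (n : ℤ) (w : D.BF n) (hw : (w : F n) = 0) : D.plim n w = 0 := by
  have h : (fun k => ((D.iter k n).1 w : E n)) = fun _ => (0 : E n) :=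
    funext fun k => (D.iter k n).2.1 w hw
  have h2 : Tendsto (fun k => ((D.iter k n).1 w : E n)) atTop (𝓝 0) := by
    rw [h]; exact tendsto_const_nhds
  exact tendsto_nhds_unique (D.plim_spec n w) h2

lemma plim_lip (n : ℤ) (w z : D.BF n) :
    ‖D.plim n w - D.plim n z‖ ≤ α * ‖(w : F n) - (z : F n)‖ :=
  le_of_tendsto' ((D.plim_spec n w).sub (D.plim_spec n z)).norm
    fun k => (D.iter k n).2.2 w z

/-- the limit family -/
noncomputable def phiStar : D.GAll := fun n =>
  ⟨fun w => ⟨D.plim n w, D.plim_norm n w⟩, fun w hw => D.plim_zero n w hw,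
    fun w z => D.plim_lip n w z⟩

lemma plim_dist (k : ℕ) (n : ℤ) (w : D.BF n) :
    ‖D.plim n w - ((D.iter k n).1 w : E n)‖ ≤ (α * γ ^ k / (1 - γ)) * ‖(w : F n)‖ := by
  have h := dist_le_of_le_geometric_of_tendsto γ (α * ‖(w : F n)‖) D.hγ1
    (D.iter_dist n w) (D.plim_spec n w) k
  rw [dist_comm, dist_eq_norm] at h
  calc ‖D.plim n w - ((D.iter k n).1 w : E n)‖
      ≤ (α * ‖(w : F n)‖) * γ ^ k / (1 - γ) := h
    _ = (α * γ ^ k / (1 - γ)) * ‖(w : F n)‖ := by ring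

lemma GT_phiStar : D.GT D.phiStar = D.phiStar := by
  have hγ1' : (0:ℝ) < 1 - γ := by linarith [D.hγ1]
  have key : ∀ (n : ℤ) (w : D.BF n),
      ((D.GT D.phiStar n).1 w : E n) = ((D.phiStar n).1 w : E n) := by
    intro n w
    have hle : ∀ k : ℕ, ‖((D.GT D.phiStar n).1 w : E n) - ((D.phiStar n).1 w : E n)‖ ≤
        γ * (α * γ ^ k / (1 - γ)) * ‖(w : F n)‖ +
        ‖((D.iter (k+1) n).1 w : E n) - D.plim n w‖ := by
      intro k
      have h1 : ∀ (m : ℤ) (u : D.BF m),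
          ‖((D.phiStar m).1 u : E m) - ((D.iter k m).1 u : E m)‖ ≤
            (α * γ ^ k / (1 - γ)) * ‖(u : F m)‖ := fun m u => D.plim_dist k m u
      have h2 := D.GT_contr (C := α * γ ^ k / (1 - γ))
        (div_nonneg (mul_nonneg D.hα0.le (pow_nonneg D.hγ0.le k)) hγ1'.le) _ _ h1 n w
      have h3 : ((D.GT (D.iter k) n).1 w : E n) = ((D.iter (k+1) n).1 w : E n) := rfl
      calc ‖((D.GT D.phiStar n).1 w : E n) - ((D.phiStar n).1 w : E n)‖
          ≤ ‖((D.GT D.phiStar n).1 w : E n) - ((D.iter (k+1) n).1 w : E n)‖ +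
            ‖((D.iter (k+1) n).1 w : E n) - ((D.phiStar n).1 w : E n)‖ :=
            norm_sub_le_norm_sub_add_norm_sub _ _ _
        _ ≤ γ * (α * γ ^ k / (1 - γ)) * ‖(w : F n)‖ +
            ‖((D.iter (k+1) n).1 w : E n) - D.plim n w‖ := by
            refine add_le_add ?_ le_rfl
            rw [← h3]
            exact h2
    have ht1 : Tendsto (fun k : ℕ => γ * (α * γ ^ k / (1 - γ)) * ‖(w : F n)‖) atTop (𝓝 0) := by
      have he : (fun k : ℕ => γ * (α * γ ^ k / (1 - γ)) * ‖(w : F n)‖) =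
          fun k : ℕ => (γ * α / (1 - γ) * ‖(w : F n)‖) * γ ^ k := by
        funext k; ring
      rw [he]
      have := (tendsto_pow_atTop_nhds_zero_of_lt_one (D.hγ0).le D.hγ1).const_mul
        (γ * α / (1 - γ) * ‖(w : F n)‖)
      simpa using this
    have ht2 : Tendsto (fun k : ℕ => ‖((D.iter (k+1) n).1 w : E n) - D.plim n w‖)
        atTop (𝓝 0) := by
      have hshift : Tendsto (fun k : ℕ => ((D.iter (k+1) n).1 w : E n)) atTop
          (𝓝 (D.plim n w)) := (D.plim_spec n w).comp (tendsto_add_atTop_nat 1)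
      have h0 : Tendsto (fun k : ℕ => ((D.iter (k+1) n).1 w : E n) - D.plim n w) atTop
          (𝓝 (D.plim n w - D.plim n w)) := hshift.sub tendsto_const_nhds
      rw [sub_self] at h0
      simpa using h0.norm
    have htot := ht1.add ht2
    rw [add_zero] at htot
    have hX : ‖((D.GT D.phiStar n).1 w : E n) - ((D.phiStar n).1 w : E n)‖ ≤ 0 :=
      ge_of_tendsto' htot hle
    have := le_antisymm hX (norm_nonneg _)
    rwa [norm_eq_zero, sub_eq_zero] at this
  funext n
  apply Subtype.ext
  funext w
  exact Subtype.ext (key n w)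

lemma phiStar_succ (n : ℤ) : D.phiStar (n+1) = D.Tr (D.phiStar n) := by
  conv_lhs => rw [← D.GT_phiStar]
  exact D.GT_succ D.phiStar n

lemma fixed_unique (φ ψ : D.GAll) (hφ : D.GT φ = φ) (hψ : D.GT ψ = ψ) : φ = ψ := by
  have key : ∀ (k : ℕ) (n : ℤ) (w : D.BF n),
      ‖((φ n).1 w : E n) - ((ψ n).1 w : E n)‖ ≤ (2 * α) * γ ^ k * ‖(w : F n)‖ := by
    intro k
    induction k with
    | zero =>
        intro n w
        rw [pow_zero, mul_one]
        calc ‖((φ n).1 w : E n) - ((ψ n).1 w : E n)‖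
            ≤ ‖((φ n).1 w : E n)‖ + ‖((ψ n).1 w : E n)‖ := norm_sub_le _ _
          _ ≤ α * ‖(w : F n)‖ + α * ‖(w : F n)‖ :=
              add_le_add (D.good_norm (φ n) w) (D.good_norm (ψ n) w)
          _ = 2 * α * ‖(w : F n)‖ := by ring
    | succ k ih =>
        intro n w
        have h := D.GT_contr (C := 2 * α * γ ^ k)
          (mul_nonneg (by linarith [D.hα0]) (pow_nonneg D.hγ0.le k)) _ _ ih n w
        rw [hφ, hψ] at h
        have he : γ * (2 * α * γ ^ k) * ‖(w : F n)‖ = 2 * α * γ ^ (k+1) * ‖(w : F n)‖ := by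
          ring
        rw [← he]
        exact h
  funext n
  apply Subtype.ext
  funext w
  apply Subtype.ext
  have ht : Tendsto (fun k : ℕ => (2 * α) * γ ^ k * ‖(w : F n)‖) atTop (𝓝 0) := by
    have he : (fun k : ℕ => (2 * α) * γ ^ k * ‖(w : F n)‖) =
        fun k : ℕ => ((2 * α) * ‖(w : F n)‖) * γ ^ k := by funext k; ring
    rw [he]
    simpa using (tendsto_pow_atTop_nhds_zero_of_lt_one (D.hγ0).le D.hγ1).const_mul
      ((2 * α) * ‖(w : F n)‖)
  have hX : ‖((φ n).1 w : E n) - ((ψ n).1 w : E n)‖ ≤ 0 :=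
    ge_of_tendsto' ht fun k => key k n w
  have := le_antisymm hX (norm_nonneg _)
  rwa [norm_eq_zero, sub_eq_zero] at this


lemma graph_eq (f : D.Gam n) :
    {p : E (n+1) × F (n+1) | (∃ w : D.BF n, p = (D.val f w, D.img f w)) ∧
      ‖p.1‖ ≤ D.δ (n+1) ∧ ‖p.2‖ ≤ D.δ (n+1)} =
    {p : E (n+1) × F (n+1) |
      ∃ w' : D.BF (n+1), p = (((D.Tr f).1 w' : E (n+1)), (w' : F (n+1)))} := by
  ext p
  simp only [Set.mem_setOf_eq]
  constructor
  · rintro ⟨⟨w, rfl⟩, h1, h2⟩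
    have hchi : w = D.chi f ⟨D.img f w, h2⟩ := D.chi_unique f _ rfl
    exact ⟨⟨D.img f w, h2⟩, by rw [D.Tr_apply, ← hchi]⟩
  · rintro ⟨w', rfl⟩
    refine ⟨⟨D.chi f w', by rw [D.Tr_apply, D.chi_spec]⟩, ((D.Tr f).1 w').2, w'.2⟩

lemma graph_sub (f : D.Gam n) :
    {p : E (n+1) × F (n+1) |
      ∃ w' : D.BF (n+1), p = (((D.Tr f).1 w' : E (n+1)), (w' : F (n+1)))} ⊆
    {p : E (n+1) × F (n+1) | ∃ w : D.BF n, p = (D.val f w, D.img f w)} := by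
  rintro p ⟨w', rfl⟩
  exact ⟨D.chi f w', by rw [D.Tr_apply, D.chi_spec]⟩

lemma fixed_of_graphs (ψ : D.GAll)
    (hgr : ∀ n : ℤ,
      {p : E (n+1) × F (n+1) | (∃ w : D.BF n, p = (D.val (ψ n) w, D.img (ψ n) w)) ∧
        ‖p.1‖ ≤ D.δ (n+1) ∧ ‖p.2‖ ≤ D.δ (n+1)} =
      {p : E (n+1) × F (n+1) |
        ∃ w' : D.BF (n+1), p = (((ψ (n+1)).1 w' : E (n+1)), (w' : F (n+1)))}) :
    D.GT ψ = ψ := by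
  have hlevel : ∀ n : ℤ, D.Tr (ψ n) = ψ (n+1) := by
    intro n
    apply Subtype.ext
    funext w'
    apply Subtype.ext
    have hmem : ((((ψ (n+1)).1 w' : E (n+1)), (w' : F (n+1))) : E (n+1) × F (n+1)) ∈
        {p : E (n+1) × F (n+1) | (∃ w : D.BF n, p = (D.val (ψ n) w, D.img (ψ n) w)) ∧
          ‖p.1‖ ≤ D.δ (n+1) ∧ ‖p.2‖ ≤ D.δ (n+1)} := by
      rw [hgr n]
      exact ⟨w', rfl⟩
    obtain ⟨⟨w, hp⟩, -, -⟩ := hmem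
    have hp1 : ((ψ (n+1)).1 w' : E (n+1)) = D.val (ψ n) w := congrArg Prod.fst hp
    have hp2 : (w' : F (n+1)) = D.img (ψ n) w := congrArg Prod.snd hp
    have hchi : w = D.chi (ψ n) w' := D.chi_unique (ψ n) w' hp2.symm
    show ((D.Tr (ψ n)).1 w' : E (n+1)) = _
    rw [D.Tr_apply, ← hchi, ← hp1]
  funext n
  show D.shiftG _ (D.Tr (ψ (n-1))) = ψ n
  rw [hlevel (n-1)]
  exact D.shiftG_family _ ψ

end HPData



/-- Hadamard–Perron for sequences of Banach spaces (Proposition "funciongrafico" +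
Banach fixed point): there is a unique family `(φₙ)_{n∈ℤ}` of `α`-Lipschitz maps
`φₙ : B_{Fₙ}(δₙ) → B_{Eₙ}(δₙ)` with `φₙ 0 = 0` whose graphs are invariant under the
hyperbolic maps `fₙ(v,w) = (Aₙ v + aₙ(v,w), Bₙ w + bₙ(v,w))`, in the sense that the
image of the graph of `φₙ` intersected with `B_{Eₙ₊₁}(δₙ₊₁) × B_{Fₙ₊₁}(δₙ₊₁)` equals
the graph of `φₙ₊₁`; in particular the graph of `φₙ₊₁` is contained in the image under
`fₙ` of the graph of `φₙ`. -/
theorem hadamard_perron_graphs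
    (α γ : ℝ) (hα : α ∈ Set.Ioo (0 : ℝ) 1) (hγ : γ ∈ Set.Ioo (0 : ℝ) 1)
    (E F : ℤ → Type*)
    [∀ n, NormedAddCommGroup (E n)] [∀ n, NormedSpace ℝ (E n)] [∀ n, CompleteSpace (E n)]
    [∀ n, NormedAddCommGroup (F n)] [∀ n, NormedSpace ℝ (F n)] [∀ n, CompleteSpace (F n)]
    (A : ∀ n : ℤ, E n →L[ℝ] E (n + 1)) (B : ∀ n : ℤ, F n ≃L[ℝ] F (n + 1))
    (μ κ : ℤ → ℝ) (hμ : ∀ n, 0 ≤ μ n) (hκ : ∀ n, 0 < κ n)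
    (hμκ : ∀ n, μ n < γ * (κ n)⁻¹)
    (hA : ∀ n, ‖A n‖ ≤ μ n) (hB : ∀ n, ‖((B n).symm : F (n + 1) →L[ℝ] F n)‖ ≤ κ n)
    (δ : ℤ → ℝ) (hδ : ∀ n, 0 < δ n)
    (hδδ : ∀ n, δ (n + 1) ≤ (((κ n)⁻¹ + α * μ n) / (1 + α)) * δ n)
    (a : ∀ n : ℤ, {v : E n // ‖v‖ ≤ δ n} → {w : F n // ‖w‖ ≤ δ n} → E (n + 1))
    (b : ∀ n : ℤ, {v : E n // ‖v‖ ≤ δ n} → {w : F n // ‖w‖ ≤ δ n} → F (n + 1))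
    (σ : ℤ → ℝ) (hσ0 : ∀ n, 0 ≤ σ n)
    (hσ : ∀ n, σ n ≤ min (((κ n)⁻¹ - μ n) * α / (1 + α) ^ 2)
      ((γ * (κ n)⁻¹ - μ n) / ((1 + α) * (1 + γ))))
    (ha0 : ∀ (n : ℤ) (v : {v : E n // ‖v‖ ≤ δ n}) (w : {w : F n // ‖w‖ ≤ δ n}),
      (v : E n) = 0 → (w : F n) = 0 → a n v w = 0)
    (hb0 : ∀ (n : ℤ) (v : {v : E n // ‖v‖ ≤ δ n}) (w : {w : F n // ‖w‖ ≤ δ n}),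
      (v : E n) = 0 → (w : F n) = 0 → b n v w = 0)
    (ha : ∀ (n : ℤ) (v v' : {v : E n // ‖v‖ ≤ δ n}) (w w' : {w : F n // ‖w‖ ≤ δ n}),
      ‖a n v w - a n v' w'‖ ≤ σ n * (‖(v : E n) - (v' : E n)‖ + ‖(w : F n) - (w' : F n)‖))
    (hb : ∀ (n : ℤ) (v v' : {v : E n // ‖v‖ ≤ δ n}) (w w' : {w : F n // ‖w‖ ≤ δ n}),
      ‖b n v w - b n v' w'‖ ≤ σ n * (‖(v : E n) - (v' : E n)‖ + ‖(w : F n) - (w' : F n)‖)) :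
    ∃ φ : ∀ n : ℤ, {w : F n // ‖w‖ ≤ δ n} → {v : E n // ‖v‖ ≤ δ n},
      ((∀ (n : ℤ) (w : {w : F n // ‖w‖ ≤ δ n}), (w : F n) = 0 → (φ n w : E n) = 0) ∧
       (∀ (n : ℤ) (w z : {w : F n // ‖w‖ ≤ δ n}),
          ‖(φ n w : E n) - (φ n z : E n)‖ ≤ α * ‖(w : F n) - (z : F n)‖) ∧
       (∀ n : ℤ,
          {p : E (n + 1) × F (n + 1) |
              (∃ w : {w : F n // ‖w‖ ≤ δ n},
                p = (A n (φ n w : E n) + a n (φ n w) w, B n (w : F n) + b n (φ n w) w)) ∧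
              ‖p.1‖ ≤ δ (n + 1) ∧ ‖p.2‖ ≤ δ (n + 1)} =
            {p : E (n + 1) × F (n + 1) |
              ∃ w' : {w' : F (n + 1) // ‖w'‖ ≤ δ (n + 1)},
                p = ((φ (n + 1) w' : E (n + 1)), (w' : F (n + 1)))})) ∧
      (∀ n : ℤ,
        {p : E (n + 1) × F (n + 1) |
            ∃ w' : {w' : F (n + 1) // ‖w'‖ ≤ δ (n + 1)},
              p = ((φ (n + 1) w' : E (n + 1)), (w' : F (n + 1)))} ⊆
          {p : E (n + 1) × F (n + 1) |
            ∃ w : {w : F n // ‖w‖ ≤ δ n},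
              p = (A n (φ n w : E n) + a n (φ n w) w, B n (w : F n) + b n (φ n w) w)}) ∧
      (∀ φ' : ∀ n : ℤ, {w : F n // ‖w‖ ≤ δ n} → {v : E n // ‖v‖ ≤ δ n},
        ((∀ (n : ℤ) (w : {w : F n // ‖w‖ ≤ δ n}), (w : F n) = 0 → (φ' n w : E n) = 0) ∧
         (∀ (n : ℤ) (w z : {w : F n // ‖w‖ ≤ δ n}),
            ‖(φ' n w : E n) - (φ' n z : E n)‖ ≤ α * ‖(w : F n) - (z : F n)‖) ∧
         (∀ n : ℤ,
            {p : E (n + 1) × F (n + 1) |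
                (∃ w : {w : F n // ‖w‖ ≤ δ n},
                  p = (A n (φ' n w : E n) + a n (φ' n w) w,
                       B n (w : F n) + b n (φ' n w) w)) ∧
                ‖p.1‖ ≤ δ (n + 1) ∧ ‖p.2‖ ≤ δ (n + 1)} =
              {p : E (n + 1) × F (n + 1) |
                ∃ w' : {w' : F (n + 1) // ‖w'‖ ≤ δ (n + 1)},
                  p = ((φ' (n + 1) w' : E (n + 1)), (w' : F (n + 1)))})) →
        φ' = φ) := by
  obtain ⟨hα0, hα1⟩ := hα
  obtain ⟨hγ0, hγ1⟩ := hγ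
  let D : HPData α γ E F :=
    ⟨hα0, hα1, hγ0, hγ1, A, B, μ, κ, hμ, hκ, hμκ, hA, hB, δ, hδ, hδδ, a, b, σ, hσ0, hσ,
      ha0, hb0, ha, hb⟩
  refine ⟨fun n => (D.phiStar n).1, ⟨fun n => (D.phiStar n).2.1, fun n => (D.phiStar n).2.2,
    ?_⟩, ?_, ?_⟩
  · intro n
    have h := D.graph_eq (D.phiStar n)
    rw [← D.phiStar_succ n] at h
    exact h
  · intro n
    have h := D.graph_sub (D.phiStar n)
    rw [← D.phiStar_succ n] at h
    exact h
  · rintro φ' ⟨h1, h2, h3⟩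
    have hfix : D.GT (fun n => ⟨φ' n, h1 n, h2 n⟩) = fun n => ⟨φ' n, h1 n, h2 n⟩ :=
      D.fixed_of_graphs (fun n => ⟨φ' n, h1 n, h2 n⟩) h3
    have heq := D.fixed_unique (fun n => ⟨φ' n, h1 n, h2 n⟩) D.phiStar hfix D.GT_phiStar
    funext n
    exact congrArg Subtype.val (congrFun heq n)
end

section
/- Let E, E′, F, F′ be real normed spaces, let A : E → E′ be continuous linear with ‖A‖ ≤ μ, and B : F ≃ F′ a continuous linear equivalence with ‖B⁻¹‖ ≤ κ, where μ ≥ 0 and κ > 0. Let α ∈ (0,1], σ ≥ 0 with σ(1+α) < κ⁻¹, and δ > 0. Let a : B_E(δ) × B_F(δ) → E′ and b : B_E(δ) × B_F(δ) → F′ satisfy a(0,0) = 0, b(0,0) = 0 and ‖b(v,w) − b(v′,w′)‖ ≤ σ·(‖v−v′‖ + ‖w−w′‖), and define f(v,w) = (A(v) + a(v,w), B(w) + b(v,w)). Then for every α-Lipschitz map φ : B_F(δ) → B_E(δ) with φ(0) = 0 and every w ∈ B_F(δ), one has, with the max norm ‖(v,w)‖ = max(‖v‖, ‖w‖) on products,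 ‖f(φ(w), w)‖ ≥ (κ⁻¹ − σ(1+α))·‖(φ(w), w)‖. -/
/-- One-step expansion estimate along `α`-Lipschitz graphs: with the max norm on
products, `‖f(φ w, w)‖ ≥ (κ⁻¹ − σ(1+α))·‖(φ w, w)‖` for every `α`-Lipschitz
`φ : B_F(δ) → B_E(δ)` with `φ 0 = 0`, where
`f(v,w) = (A v + a(v,w), B w + b(v,w))`, `‖A‖ ≤ μ`, `‖B⁻¹‖ ≤ κ`, `a(0,0) = 0`,
`b(0,0) = 0`, and `b` is `σ`-Lipschitz with `σ(1+α) < κ⁻¹`. -/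
theorem graph_one_step_expansion
    (E E' F F' : Type*)
    [NormedAddCommGroup E] [NormedSpace ℝ E] [NormedAddCommGroup E'] [NormedSpace ℝ E']
    [NormedAddCommGroup F] [NormedSpace ℝ F] [NormedAddCommGroup F'] [NormedSpace ℝ F']
    (A : E →L[ℝ] E') (B : F ≃L[ℝ] F') (μ κ : ℝ) (hμ : 0 ≤ μ) (hκ : 0 < κ)
    (hA : ‖A‖ ≤ μ) (hB : ‖(B.symm : F' →L[ℝ] F)‖ ≤ κ)
    (α : ℝ) (hα : α ∈ Set.Ioc (0 : ℝ) 1)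
    (σ : ℝ) (hσ0 : 0 ≤ σ) (hσ : σ * (1 + α) < κ⁻¹)
    (δ : ℝ) (hδ : 0 < δ)
    (a : {v : E // ‖v‖ ≤ δ} → {w : F // ‖w‖ ≤ δ} → E')
    (b : {v : E // ‖v‖ ≤ δ} → {w : F // ‖w‖ ≤ δ} → F')
    (ha0 : ∀ (v : {v : E // ‖v‖ ≤ δ}) (w : {w : F // ‖w‖ ≤ δ}),
      (v : E) = 0 → (w : F) = 0 → a v w = 0)
    (hb0 : ∀ (v : {v : E // ‖v‖ ≤ δ}) (w : {w : F // ‖w‖ ≤ δ}),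
      (v : E) = 0 → (w : F) = 0 → b v w = 0)
    (hb : ∀ (v v' : {v : E // ‖v‖ ≤ δ}) (w w' : {w : F // ‖w‖ ≤ δ}),
      ‖b v w - b v' w'‖ ≤ σ * (‖(v : E) - (v' : E)‖ + ‖(w : F) - (w' : F)‖))
    (φ : {w : F // ‖w‖ ≤ δ} → {v : E // ‖v‖ ≤ δ})
    (hφ0 : ∀ w : {w : F // ‖w‖ ≤ δ}, (w : F) = 0 → (φ w : E) = 0)
    (hφ : ∀ w z : {w : F // ‖w‖ ≤ δ}, ‖(φ w : E) - (φ z : E)‖ ≤ α * ‖(w : F) - (z : F)‖) :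
    ∀ w : {w : F // ‖w‖ ≤ δ},
      (κ⁻¹ - σ * (1 + α)) * max ‖(φ w : E)‖ ‖(w : F)‖ ≤
        max ‖A (φ w : E) + a (φ w) w‖ ‖B (w : F) + b (φ w) w‖ := by
  intro w
  obtain ⟨hα0, hα1⟩ := hα
  set z : {w : F // ‖w‖ ≤ δ} := ⟨0, by simp [le_of_lt hδ]⟩
  have hz : (z : F) = 0 := rfl
  -- ‖φ w‖ ≤ α ‖w‖ ≤ ‖w‖
  have hφw : ‖(φ w : E)‖ ≤ α * ‖(w : F)‖ := by
    have := hφ w z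
    simpa [hz, hφ0 z hz] using this
  have hφw' : ‖(φ w : E)‖ ≤ ‖(w : F)‖ :=
    hφw.trans (by nlinarith [norm_nonneg (w : F)])
  have hmax : max ‖(φ w : E)‖ ‖(w : F)‖ = ‖(w : F)‖ := max_eq_right hφw'
  rw [hmax]
  -- lower bound on ‖B w‖
  have hBw : κ⁻¹ * ‖(w : F)‖ ≤ ‖B (w : F)‖ := by
    have h1 : ‖(w : F)‖ ≤ κ * ‖B (w : F)‖ := by
      have := (B.symm : F' →L[ℝ] F).le_opNorm (B (w : F))
      have h2 : ‖(B.symm : F' →L[ℝ] F)‖ * ‖B (w : F)‖ ≤ κ * ‖B (w : F)‖ :=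
        mul_le_mul_of_nonneg_right hB (norm_nonneg _)
      simpa using this.trans h2
    rw [inv_mul_le_iff₀ hκ]
    linarith [mul_comm κ ‖B (w : F)‖ ▸ h1]
  -- bound on ‖b (φ w) w‖
  have hbw : ‖b (φ w) w‖ ≤ σ * (1 + α) * ‖(w : F)‖ := by
    have := hb (φ w) ⟨0, by simp [le_of_lt hδ]⟩ w z
    rw [hb0 ⟨0, by simp [le_of_lt hδ]⟩ z rfl rfl] at this
    have h3 : ‖b (φ w) w - 0‖ ≤ σ * (‖(φ w : E)‖ + ‖(w : F)‖) := by
      simpa [hz, hφ0 z hz] using this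
    rw [sub_zero] at h3
    calc ‖b (φ w) w‖ ≤ σ * (‖(φ w : E)‖ + ‖(w : F)‖) := h3
      _ ≤ σ * (α * ‖(w : F)‖ + ‖(w : F)‖) := by
          apply mul_le_mul_of_nonneg_left _ hσ0
          linarith
      _ = σ * (1 + α) * ‖(w : F)‖ := by ring
  have key : (κ⁻¹ - σ * (1 + α)) * ‖(w : F)‖ ≤ ‖B (w : F) + b (φ w) w‖ := by
    have h4 : ‖B (w : F)‖ ≤ ‖B (w : F) + b (φ w) w‖ + ‖b (φ w) w‖ := by
      have := norm_sub_le (B (w : F) + b (φ w) w) (b (φ w) w)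
      simpa using this
    nlinarith [norm_nonneg (b (φ w) w)]
  exact key.trans (le_max_right _ _)
end

section
/- Let α, γ ∈ (0,1). For each n ∈ ℤ let E_n and F_n be real Banach spaces, let A_n : E_n → E_{n+1} be continuous linear with ‖A_n‖ ≤ μ_n, and let B_n : F_n ≃ F_{n+1} be a continuous linear equivalence with ‖B_n⁻¹‖ ≤ κ_n, where μ_n ≥ 0, κ_n > 0 and μ_n < γ·κ_n⁻¹. Let (δ_n)_{n∈ℤ} be positive reals with δ_{n+1} ≤ ((κ_n⁻¹ + α·μ_n)/(1+α))·δ_n for every n ∈ ℤ. Let a_n : B_{E_n}(δ_n) × B_{F_n}(δ_n) → E_{n+1} and b_n : B_{E_n}(δ_n) × B_{F_n}(δ_n) → F_{n+1} satisfy a_n(0,0) = 0, b_n(0,0) = 0, ‖a_n(v,w) − a_n(v′,w′)‖ ≤ σ_n·(‖v−v′‖ + ‖w−w′‖) and ‖b_n(v,w) − b_n(v′,w′)‖ ≤ σ_n·(‖v−v′‖ + ‖w−w′‖), where 0 ≤ σ_n ≤ min{(κ_n⁻¹ − μ_n)·α/(1+α)², (γ·κ_n⁻¹ − μ_n)/((1+α)(1+γ))},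 and define f_n(v,w) = (A_n(v) + a_n(v,w), B_n(w) + b_n(v,w)). Let (φ_n)_{n∈ℤ} be a family such that each φ_n : B_{F_n}(δ_n) → B_{E_n}(δ_n) is α-Lipschitz with φ_n(0) = 0 and such that for every n the graph of φ_{n+1} equals {f_n(φ_n(w), w) : w ∈ B_{F_n}(δ_n)} ∩ (B_{E_{n+1}}(δ_{n+1}) × B_{F_{n+1}}(δ_{n+1})). Equip each product E_j × F_j with the max norm ‖(v,w)‖ = max(‖v‖, ‖w‖). Then for every n ∈ ℤ, every integer k ≥ 0, and every w ∈ B_{F_{n+1}}(δ_{n+1}), there exist points x_j for j = n−k, …, n+1 with x_j = (φ_j(w_j), w_j) for some w_j ∈ B_{F_j}(δ_j), such that x_{n+1} = (φ_{n+1}(w), w), f_j(x_j) = x_{j+1} for n−k ≤ j ≤ n, and ‖x_{n−k}‖ ≤ ( ∏_{j=n−k}^{n} (κ_j⁻¹ − σ_j(1+α))⁻¹ ) · ‖x_{n+1}‖. -/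
/-- Quantitative backward contraction along the invariant family of `α`-Lipschitz
graphs (inequality "desigualdadeexponenciales" / Theorem "primerpropovariedade"(iii)):
any point `(φ_{n+1} w, w)` of the invariant graphs has a backward orbit
`x_j = (φ_j w_j, w_j)`, `j = n−k, …, n+1`, along the graphs with `f_j x_j = x_{j+1}`,
whose max-norms satisfy
`‖x_{n−k}‖ ≤ (∏_{j=n−k}^{n} (κ_j⁻¹ − σ_j(1+α))⁻¹) · ‖x_{n+1}‖`. -/
theorem invariant_graphs_backward_contraction
    (α γ : ℝ) (hα : α ∈ Set.Ioo (0 : ℝ) 1) (hγ : γ ∈ Set.Ioo (0 : ℝ) 1)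
    (E F : ℤ → Type*)
    [∀ n, NormedAddCommGroup (E n)] [∀ n, NormedSpace ℝ (E n)] [∀ n, CompleteSpace (E n)]
    [∀ n, NormedAddCommGroup (F n)] [∀ n, NormedSpace ℝ (F n)] [∀ n, CompleteSpace (F n)]
    (A : ∀ n : ℤ, E n →L[ℝ] E (n + 1)) (B : ∀ n : ℤ, F n ≃L[ℝ] F (n + 1))
    (μ κ : ℤ → ℝ) (hμ : ∀ n, 0 ≤ μ n) (hκ : ∀ n, 0 < κ n)
    (hμκ : ∀ n, μ n < γ * (κ n)⁻¹)
    (hA : ∀ n, ‖A n‖ ≤ μ n) (hB : ∀ n, ‖((B n).symm : F (n + 1) →L[ℝ] F n)‖ ≤ κ n)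
    (δ : ℤ → ℝ) (hδ : ∀ n, 0 < δ n)
    (hδδ : ∀ n, δ (n + 1) ≤ (((κ n)⁻¹ + α * μ n) / (1 + α)) * δ n)
    (a : ∀ n : ℤ, {v : E n // ‖v‖ ≤ δ n} → {w : F n // ‖w‖ ≤ δ n} → E (n + 1))
    (b : ∀ n : ℤ, {v : E n // ‖v‖ ≤ δ n} → {w : F n // ‖w‖ ≤ δ n} → F (n + 1))
    (σ : ℤ → ℝ) (hσ0 : ∀ n, 0 ≤ σ n)
    (hσ : ∀ n, σ n ≤ min (((κ n)⁻¹ - μ n) * α / (1 + α) ^ 2)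
      ((γ * (κ n)⁻¹ - μ n) / ((1 + α) * (1 + γ))))
    (ha0 : ∀ (n : ℤ) (v : {v : E n // ‖v‖ ≤ δ n}) (w : {w : F n // ‖w‖ ≤ δ n}),
      (v : E n) = 0 → (w : F n) = 0 → a n v w = 0)
    (hb0 : ∀ (n : ℤ) (v : {v : E n // ‖v‖ ≤ δ n}) (w : {w : F n // ‖w‖ ≤ δ n}),
      (v : E n) = 0 → (w : F n) = 0 → b n v w = 0)
    (ha : ∀ (n : ℤ) (v v' : {v : E n // ‖v‖ ≤ δ n}) (w w' : {w : F n // ‖w‖ ≤ δ n}),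
      ‖a n v w - a n v' w'‖ ≤ σ n * (‖(v : E n) - (v' : E n)‖ + ‖(w : F n) - (w' : F n)‖))
    (hb : ∀ (n : ℤ) (v v' : {v : E n // ‖v‖ ≤ δ n}) (w w' : {w : F n // ‖w‖ ≤ δ n}),
      ‖b n v w - b n v' w'‖ ≤ σ n * (‖(v : E n) - (v' : E n)‖ + ‖(w : F n) - (w' : F n)‖))
    (φ : ∀ n : ℤ, {w : F n // ‖w‖ ≤ δ n} → {v : E n // ‖v‖ ≤ δ n})
    (hφ0 : ∀ (n : ℤ) (w : {w : F n // ‖w‖ ≤ δ n}), (w : F n) = 0 → (φ n w : E n) = 0)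
    (hφ : ∀ (n : ℤ) (w z : {w : F n // ‖w‖ ≤ δ n}),
      ‖(φ n w : E n) - (φ n z : E n)‖ ≤ α * ‖(w : F n) - (z : F n)‖)
    (hgraph : ∀ n : ℤ,
      {p : E (n + 1) × F (n + 1) |
          ∃ w' : {w' : F (n + 1) // ‖w'‖ ≤ δ (n + 1)},
            p = ((φ (n + 1) w' : E (n + 1)), (w' : F (n + 1)))} =
        {p : E (n + 1) × F (n + 1) |
          (∃ w : {w : F n // ‖w‖ ≤ δ n},
            p = (A n (φ n w : E n) + a n (φ n w) w, B n (w : F n) + b n (φ n w) w)) ∧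
          ‖p.1‖ ≤ δ (n + 1) ∧ ‖p.2‖ ≤ δ (n + 1)}) :
    ∀ (n : ℤ) (k : ℕ) (w : {x : F (n + 1) // ‖x‖ ≤ δ (n + 1)}),
      ∃ ws : ∀ j : ℤ, {x : F j // ‖x‖ ≤ δ j},
        ws (n + 1) = w ∧
        (∀ j : ℤ, n - (k : ℤ) ≤ j → j ≤ n →
          (A j (φ j (ws j) : E j) + a j (φ j (ws j)) (ws j),
              B j (ws j : F j) + b j (φ j (ws j)) (ws j)) =
            ((φ (j + 1) (ws (j + 1)) : E (j + 1)), (ws (j + 1) : F (j + 1)))) ∧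
        max ‖(φ (n - (k : ℤ)) (ws (n - (k : ℤ))) : E (n - (k : ℤ)))‖
            ‖(ws (n - (k : ℤ)) : F (n - (k : ℤ)))‖ ≤
          (∏ j ∈ Finset.range (k + 1),
              ((κ (n - (k : ℤ) + (j : ℤ)))⁻¹ - σ (n - (k : ℤ) + (j : ℤ)) * (1 + α))⁻¹) *
            max ‖(φ (n + 1) w : E (n + 1))‖ ‖(w : F (n + 1))‖ := by
  -- positivity of the contraction factors
  have hc : ∀ j : ℤ, 0 < (κ j)⁻¹ - σ j * (1 + α) := by
    intro j
    have hσ2 : σ j ≤ (γ * (κ j)⁻¹ - μ j) / ((1 + α) * (1 + γ)) :=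
      (hσ j).trans (min_le_right _ _)
    have hD : (0:ℝ) < (1 + α) * (1 + γ) := by nlinarith [hα.1, hγ.1]
    have h2 : σ j * ((1 + α) * (1 + γ)) ≤ γ * (κ j)⁻¹ - μ j := (le_div_iff₀ hD).mp hσ2
    have ht : (0:ℝ) < (κ j)⁻¹ := inv_pos.mpr (hκ j)
    nlinarith [hμ j, hα.1, hγ.1, hγ.2, hσ0 j]
  -- the backward pullback step
  have pull : ∀ (n : ℤ) (w' : {x : F (n + 1) // ‖x‖ ≤ δ (n + 1)}),
      ∃ w : {x : F n // ‖x‖ ≤ δ n},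
        (A n (φ n w : E n) + a n (φ n w) w, B n (w : F n) + b n (φ n w) w)
          = ((φ (n + 1) w' : E (n + 1)), (w' : F (n + 1))) ∧
        max ‖(φ n w : E n)‖ ‖(w : F n)‖ ≤
          ((κ n)⁻¹ - σ n * (1 + α))⁻¹ *
            max ‖(φ (n + 1) w' : E (n + 1))‖ ‖(w' : F (n + 1))‖ := by
    intro n w'
    have hmem : ((φ (n + 1) w' : E (n + 1)), (w' : F (n + 1))) ∈
        {p : E (n + 1) × F (n + 1) |
          ∃ w'' : {w'' : F (n + 1) // ‖w''‖ ≤ δ (n + 1)},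
            p = ((φ (n + 1) w'' : E (n + 1)), (w'' : F (n + 1)))} := ⟨w', rfl⟩
    rw [hgraph n] at hmem
    obtain ⟨⟨w, hw⟩, -, -⟩ := hmem
    refine ⟨w, hw.symm, ?_⟩
    have h2 : (w' : F (n + 1)) = B n (w : F n) + b n (φ n w) w := congrArg Prod.snd hw
    have hz : ∀ m : ℤ, ‖(0 : F m)‖ ≤ δ m := fun m => by simp [(hδ m).le]
    have hzE : ∀ m : ℤ, ‖(0 : E m)‖ ≤ δ m := fun m => by simp [(hδ m).le]
    set w0 : {x : F n // ‖x‖ ≤ δ n} := ⟨0, hz n⟩ with hw0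
    have hφw : ‖(φ n w : E n)‖ ≤ α * ‖(w : F n)‖ := by
      have h := hφ n w w0
      have h0 : (φ n w0 : E n) = 0 := hφ0 n w0 rfl
      rw [h0, sub_zero] at h
      simpa [hw0] using h
    have hbnorm : ‖b n (φ n w) w‖ ≤ σ n * (1 + α) * ‖(w : F n)‖ := by
      set v0 : {x : E n // ‖x‖ ≤ δ n} := ⟨0, hzE n⟩ with hv0
      have h := hb n (φ n w) v0 w w0
      have hb00 : b n v0 w0 = 0 := hb0 n v0 w0 rfl rfl
      rw [hb00, sub_zero] at h
      have h' : ‖b n (φ n w) w‖ ≤ σ n * (‖(φ n w : E n)‖ + ‖(w : F n)‖) := by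
        simpa [hv0, hw0] using h
      have hnn : (0:ℝ) ≤ ‖(w : F n)‖ := norm_nonneg _
      nlinarith [hσ0 n]
    have hBw : (κ n)⁻¹ * ‖(w : F n)‖ ≤ ‖B n (w : F n)‖ := by
      have h1 : ‖(w : F n)‖ ≤ κ n * ‖B n (w : F n)‖ := by
        have := ((B n).symm : F (n + 1) →L[ℝ] F n).le_opNorm (B n (w : F n))
        simp only [ContinuousLinearEquiv.coe_coe, ContinuousLinearEquiv.symm_apply_apply]
          at this
        exact this.trans (mul_le_mul_of_nonneg_right (hB n) (norm_nonneg _))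
      have := mul_le_mul_of_nonneg_left h1 (inv_nonneg.mpr (hκ n).le)
      rwa [← mul_assoc, inv_mul_cancel₀ (hκ n).ne', one_mul] at this
    have hBle : ‖B n (w : F n)‖ ≤ ‖(w' : F (n + 1))‖ + σ n * (1 + α) * ‖(w : F n)‖ := by
      have he : B n (w : F n) = (w' : F (n + 1)) - b n (φ n w) w := by
        rw [h2]; abel
      rw [he]
      exact (norm_sub_le _ _).trans (by gcongr)
    have hkey : ((κ n)⁻¹ - σ n * (1 + α)) * ‖(w : F n)‖ ≤ ‖(w' : F (n + 1))‖ := by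
      nlinarith [hBw.trans hBle]
    have hwle : ‖(w : F n)‖ ≤ ((κ n)⁻¹ - σ n * (1 + α))⁻¹ * ‖(w' : F (n + 1))‖ := by
      have hcpos := hc n
      have := mul_le_mul_of_nonneg_left hkey (inv_nonneg.mpr hcpos.le)
      rwa [← mul_assoc, inv_mul_cancel₀ hcpos.ne', one_mul] at this
    have hmax : max ‖(φ n w : E n)‖ ‖(w : F n)‖ = ‖(w : F n)‖ := by
      refine max_eq_right (hφw.trans ?_)
      nlinarith [hα.2, norm_nonneg (w : F n), hα.1]
    rw [hmax]
    refine hwle.trans ?_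
    exact mul_le_mul_of_nonneg_left (le_max_right _ _) (inv_nonneg.mpr (hc n).le)
  -- the main claim, with a free variable for the bottom index
  have claim : ∀ (k : ℕ) (m n : ℤ), m + (k : ℤ) = n →
      ∀ w : {x : F (n + 1) // ‖x‖ ≤ δ (n + 1)},
      ∃ ws : ∀ j : ℤ, {x : F j // ‖x‖ ≤ δ j},
        ws (n + 1) = w ∧
        (∀ j : ℤ, m ≤ j → j ≤ n →
          (A j (φ j (ws j) : E j) + a j (φ j (ws j)) (ws j),
              B j (ws j : F j) + b j (φ j (ws j)) (ws j)) =
            ((φ (j + 1) (ws (j + 1)) : E (j + 1)), (ws (j + 1) : F (j + 1)))) ∧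
        max ‖(φ m (ws m) : E m)‖ ‖(ws m : F m)‖ ≤
          (∏ j ∈ Finset.range (k + 1),
              ((κ (m + (j : ℤ)))⁻¹ - σ (m + (j : ℤ)) * (1 + α))⁻¹) *
            max ‖(φ (n + 1) w : E (n + 1))‖ ‖(w : F (n + 1))‖ := by
    intro k
    induction k with
    | zero =>
      intro m n hmn w
      obtain rfl : m = n := by omega
      obtain ⟨wn, hstep, hbnd⟩ := pull m w
      refine ⟨Function.update
        (Function.update (fun j => ⟨0, by simp [(hδ j).le]⟩) m wn) (m + 1) w, ?_, ?_, ?_⟩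
      · rw [Function.update_self]
      · intro j hj1 hj2
        have hj : j = m := le_antisymm hj2 hj1
        subst hj
        rw [Function.update_self, Function.update_of_ne (show j ≠ j + 1 by omega),
          Function.update_self]
        exact hstep
      · rw [Function.update_of_ne (show m ≠ m + 1 by omega), Function.update_self,
          Finset.prod_range_one]
        simpa using hbnd
    | succ k IH =>
      intro m n hmn w
      obtain ⟨ws, hws, hstep, hbnd⟩ := IH (m + 1) n (by push_cast at hmn ⊢; omega) w
      obtain ⟨wm, hstepm, hbndm⟩ := pull m (ws (m + 1))
      refine ⟨Function.update ws m wm, ?_, ?_, ?_⟩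
      · rw [Function.update_of_ne (show n + 1 ≠ m by omega)]
        exact hws
      · intro j hj1 hj2
        rcases eq_or_lt_of_le hj1 with hjm | hjm
        · subst hjm
          rw [Function.update_self, Function.update_of_ne (show m + 1 ≠ m by omega)]
          exact hstepm
        · rw [Function.update_of_ne (show j ≠ m by omega),
            Function.update_of_ne (show j + 1 ≠ m by omega)]
          exact hstep j (by omega) hj2
      · rw [Function.update_self, Finset.prod_range_succ']
        have hP : ∀ i : ℕ,
            ((κ (m + ((i + 1 : ℕ) : ℤ)))⁻¹ - σ (m + ((i + 1 : ℕ) : ℤ)) * (1 + α))⁻¹ =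
            ((κ (m + 1 + (i : ℤ)))⁻¹ - σ (m + 1 + (i : ℤ)) * (1 + α))⁻¹ := by
          intro i
          have : m + ((i + 1 : ℕ) : ℤ) = m + 1 + (i : ℤ) := by push_cast; ring
          rw [this]
        rw [Finset.prod_congr rfl (fun i _ => hP i)]
        simp only [Nat.cast_zero, add_zero]
        have hPpos : (0:ℝ) < ∏ j ∈ Finset.range (k + 1),
            ((κ (m + 1 + (j:ℤ)))⁻¹ - σ (m + 1 + (j:ℤ)) * (1 + α))⁻¹ :=
          Finset.prod_pos fun j _ => inv_pos.mpr (hc _)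
        calc max ‖(φ m wm : E m)‖ ‖(wm : F m)‖
            ≤ ((κ m)⁻¹ - σ m * (1 + α))⁻¹ *
              (max ‖(φ (m + 1) (ws (m + 1)) : E (m + 1))‖ ‖(ws (m + 1) : F (m + 1))‖) :=
              hbndm
          _ ≤ ((κ m)⁻¹ - σ m * (1 + α))⁻¹ *
              ((∏ j ∈ Finset.range (k + 1),
                  ((κ (m + 1 + (j:ℤ)))⁻¹ - σ (m + 1 + (j:ℤ)) * (1 + α))⁻¹) *
                max ‖(φ (n + 1) w : E (n + 1))‖ ‖(w : F (n + 1))‖) :=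
              mul_le_mul_of_nonneg_left hbnd (inv_nonneg.mpr (hc m).le)
          _ = ((∏ j ∈ Finset.range (k + 1),
                  ((κ (m + 1 + (j:ℤ)))⁻¹ - σ (m + 1 + (j:ℤ)) * (1 + α))⁻¹) *
                ((κ m)⁻¹ - σ m * (1 + α))⁻¹) *
                max ‖(φ (n + 1) w : E (n + 1))‖ ‖(w : F (n + 1))‖ := by ring
  intro n k w
  exact claim k (n - (k : ℤ)) n (by ring) w
end
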